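/- arXiv:2207.06008 — 16 statements merged into one kernel-verified Lean document; each statement's English description precedes it below -/
import Mathlib

section
/- Let a > 0 and let f, g : [0,a] → ℝ be continuous functions such that f is monotone nondecreasing on [0,a] and g is monotone nonincreasing on [0,a]. Then ∫₀ᵃ f(t)·g(t) dt ≤ ∫₀ᵃ f(t)·g(a−t) dt. -/
/-!
Writing `t' = a + b - t` for the reflection of `[a, b]`, the function
`φ t = f t * (g t - g t')` satisfies `φ t + φ t' = (f t - f t') * (g t - g t') ≤ 0`, since `f` and
`g` vary in opposite directions. As the reflection preserves the integral, `2 ∫ φ ≤ 0`, and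
`∫ φ` is the difference of the two sides.
-/

open Set intervalIntegral MeasureTheory

theorem MonotoneOn.intervalIntegrable_mul {u v : ℝ → ℝ} {a b : ℝ}
    (hu : MonotoneOn u (uIcc a b)) (hv : IntervalIntegrable v volume a b) :
    IntervalIntegrable (fun t ↦ u t * v t) volume a b := by
  rw [intervalIntegrable_iff'] at hv ⊢
  exact hv.mul_of_top_right (hu.memLp_isCompact isCompact_uIcc)

theorem add_sub_mem_Icc {a b t : ℝ} (ht : t ∈ Icc a b) : a + b - t ∈ Icc a b := by
  constructor <;> linarith [ht.1, ht.2]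

theorem integral_comp_add_sub (φ : ℝ → ℝ) (a b : ℝ) :
    ∫ t in a..b, φ (a + b - t) = ∫ t in a..b, φ t := by
  simp [integral_comp_sub_left]

theorem integral_nonpos_of_add_comp_add_sub_nonpos {φ : ℝ → ℝ} {a b : ℝ} (hab : a ≤ b)
    (hφ : IntervalIntegrable φ volume a b) (h : ∀ t ∈ Icc a b, φ t + φ (a + b - t) ≤ 0) :
    ∫ t in a..b, φ t ≤ 0 := by
  have hφ' : IntervalIntegrable (fun t ↦ φ (a + b - t)) volume a b := by
    simpa using (hφ.comp_sub_left (a + b)).symm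
  have hsum : ∫ t in a..b, (φ t + φ (a + b - t)) ≤ 0 := by
    simpa using integral_mono_on hab (hφ.add hφ') intervalIntegrable_const h
  rw [integral_add hφ hφ', integral_comp_add_sub] at hsum
  linarith

theorem integral_mul_le_integral_mul_comp_add_sub {f g : ℝ → ℝ} {a b : ℝ} (hab : a ≤ b)
    (hf : MonotoneOn f (Icc a b)) (hg : AntitoneOn g (Icc a b)) :
    ∫ t in a..b, f t * g t ≤ ∫ t in a..b, f t * g (a + b - t) := by
  have hg' : MonotoneOn (fun t ↦ g (a + b - t)) (Icc a b) :=
    hg.comp (fun _ _ _ _ hst ↦ by linarith) fun _ ↦ add_sub_mem_Icc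
  have hI := uIcc_of_le hab
  have hfg := (hI ▸ hf).intervalIntegrable_mul (hI ▸ hg).intervalIntegrable
  have hfg' := (hI ▸ hf).intervalIntegrable_mul (hI ▸ hg').intervalIntegrable
  rw [← sub_nonpos, ← integral_sub hfg hfg']
  refine integral_nonpos_of_add_comp_add_sub_nonpos hab (hfg.sub hfg') fun t ht ↦ ?_
  calc _ = (f t - f (a + b - t)) * (g t - g (a + b - t)) := by rw [sub_sub_cancel]; ring
    _ ≤ 0 := (hf.antivaryOn hg).sub_mul_sub_nonpos (add_sub_mem_Icc ht) ht

theorem integral_permutation_inequality_general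
    (a : ℝ) (ha : 0 < a) (f g : ℝ → ℝ)
    (hf : MonotoneOn f (Set.Icc 0 a)) (hg : AntitoneOn g (Set.Icc 0 a)) :
    (∫ t in (0:ℝ)..a, f t * g t) ≤ ∫ t in (0:ℝ)..a, f t * g (a - t) := by
  simpa using integral_mul_le_integral_mul_comp_add_sub ha.le hf hg

/-- Integral version of the permutation (rearrangement) inequality:
if `f` is nondecreasing and `g` is nonincreasing on `[0, a]`, then
`∫₀ᵃ f·g ≤ ∫₀ᵃ f(t)·g(a−t) dt`. -/
theorem integral_permutation_inequality
    (a : ℝ) (ha : 0 < a) (f g : ℝ → ℝ)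
    (hfc : ContinuousOn f (Set.Icc 0 a)) (hgc : ContinuousOn g (Set.Icc 0 a))
    (hf : MonotoneOn f (Set.Icc 0 a)) (hg : AntitoneOn g (Set.Icc 0 a)) :
    (∫ t in (0:ℝ)..a, f t * g t) ≤ ∫ t in (0:ℝ)..a, f t * g (a - t) :=
  integral_permutation_inequality_general a ha f g hf hg
end

section
/- Let a > 0 and let f, g : [0,a] → ℝ be continuous functions such that f is monotone nondecreasing on [0,a] and g is monotone nonincreasing on [0,a]. Then ∫₀ᵃ f(t)·g(t) dt = ∫₀ᵃ f(t)·g(a−t) dt if and only if f is constant on [0,a] or g is constant on [0,a]. -/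
open Real Set intervalIntegral

/-! Put `p t = (f t - f (a - t)) * (g (a - t) - g t)`. Pairing `t` with `a - t` gives
`∫₀ᵃ p = 2 (∫₀ᵃ f(t) g(a - t) dt - ∫₀ᵃ f g)`, and `p ≥ 0` on `[0, a]` since `f` and `g` vary in
opposite directions. So equality holds iff the continuous function `p` vanishes on `[0, a]`;
at `t = 0` this says `f 0 = f a` or `g 0 = g a`, which by monotonicity makes `f` or `g`
constant. -/

theorem MonotoneOn.apply_eq_of_apply_left_eq_apply_right {f : ℝ → ℝ} {b c : ℝ}
    (hf : MonotoneOn f (Icc b c)) (hbc : f b = f c) : ∀ t ∈ Icc b c, f t = f b := fun _ ht =>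
  le_antisymm (hbc ▸ hf ht ⟨ht.1.trans ht.2, le_rfl⟩ ht.2)
    (hf ⟨le_rfl, ht.1.trans ht.2⟩ ht ht.1)

theorem AntitoneOn.apply_eq_of_apply_left_eq_apply_right {g : ℝ → ℝ} {b c : ℝ}
    (hg : AntitoneOn g (Icc b c)) (hbc : g b = g c) : ∀ t ∈ Icc b c, g t = g b := fun _ ht =>
  le_antisymm (hg ⟨le_rfl, ht.1.trans ht.2⟩ ht ht.1)
    (hbc ▸ hg ht ⟨ht.1.trans ht.2, le_rfl⟩ ht.2)

theorem integral_add_comp_reflect {h : ℝ → ℝ} {b c : ℝ}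
    (hh : IntervalIntegrable h MeasureTheory.volume b c) :
    ∫ x in b..c, (h x + h (b + c - x)) = 2 * ∫ x in b..c, h x := by
  have hrefl : ∫ x in b..c, h (b + c - x) = ∫ x in b..c, h x := by
    simp [integral_comp_sub_left]
  rw [integral_add hh (by simpa using (hh.comp_sub_left (b + c)).symm), hrefl, two_mul]

theorem integral_sub_mul_sub_reflect {f g : ℝ → ℝ} {b c : ℝ}
    (hI : IntervalIntegrable (fun t => f t * g t) MeasureTheory.volume b c)
    (hJ : IntervalIntegrable (fun t => f t * g (b + c - t)) MeasureTheory.volume b c) :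
    ∫ t in b..c, (f t - f (b + c - t)) * (g (b + c - t) - g t) =
      2 * ((∫ t in b..c, f t * g (b + c - t)) - ∫ t in b..c, f t * g t) := by
  rw [← integral_sub hJ hI, ← integral_add_comp_reflect (hJ.sub hI)]
  congr 1 with t
  rw [sub_sub_cancel]
  ring

theorem integral_eq_zero_iff_of_continuousOn_of_nonneg {p : ℝ → ℝ} {b c : ℝ} (hbc : b < c)
    (hpc : ContinuousOn p (Icc b c)) (hp : ∀ x ∈ Icc b c, 0 ≤ p x) :
    ∫ x in b..c, p x = 0 ↔ ∀ x ∈ Icc b c, p x = 0 := by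
  refine ⟨fun h x hx => ?_, fun h => ?_⟩
  · by_contra hne
    have hpos := integral_pos hbc hpc (fun y hy => hp y (Ioc_subset_Icc_self hy))
      ⟨x, hx, (hp x hx).lt_of_ne' hne⟩
    exact hpos.ne' h
  · rw [integral_congr (g := fun _ => 0) (by rwa [uIcc_of_le hbc.le]), integral_zero]

theorem sub_mul_sub_reflect_eq_zero_iff {f g : ℝ → ℝ} {b c : ℝ} (hbc : b ≤ c)
    (hf : MonotoneOn f (Icc b c)) (hg : AntitoneOn g (Icc b c)) :
    (∀ t ∈ Icc b c, (f t - f (b + c - t)) * (g (b + c - t) - g t) = 0) ↔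
      (∃ d : ℝ, ∀ t ∈ Icc b c, f t = d) ∨ (∃ d : ℝ, ∀ t ∈ Icc b c, g t = d) := by
  have hrefl : ∀ t ∈ Icc b c, b + c - t ∈ Icc b c := fun t ht =>
    ⟨by linarith [ht.2], by linarith [ht.1]⟩
  constructor
  · intro h
    have hb := h b ⟨le_rfl, hbc⟩
    rw [add_sub_cancel_left, mul_eq_zero, sub_eq_zero, sub_eq_zero] at hb
    rcases hb with hb | hb
    · exact Or.inl ⟨f b, hf.apply_eq_of_apply_left_eq_apply_right hb⟩
    · exact Or.inr ⟨g b, hg.apply_eq_of_apply_left_eq_apply_right hb.symm⟩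
  · rintro (⟨d, hd⟩ | ⟨d, hd⟩) t ht
    · rw [hd t ht, hd _ (hrefl t ht), sub_self, zero_mul]
    · rw [hd t ht, hd _ (hrefl t ht), sub_self, mul_zero]

/-- Equality case of the integral permutation (rearrangement) inequality:
if `f` is nondecreasing and `g` is nonincreasing on `[0, a]`, then
`∫₀ᵃ f·g = ∫₀ᵃ f(t)·g(a−t) dt` if and only if `f` or `g` is constant on `[0, a]`. -/
theorem integral_permutation_equality_iff
    (a : ℝ) (ha : 0 < a) (f g : ℝ → ℝ)
    (hfc : ContinuousOn f (Set.Icc 0 a)) (hgc : ContinuousOn g (Set.Icc 0 a))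
    (hf : MonotoneOn f (Set.Icc 0 a)) (hg : AntitoneOn g (Set.Icc 0 a)) :
    (∫ t in (0:ℝ)..a, f t * g t) = (∫ t in (0:ℝ)..a, f t * g (a - t)) ↔
      (∃ c : ℝ, ∀ t ∈ Set.Icc 0 a, f t = c) ∨ (∃ c : ℝ, ∀ t ∈ Set.Icc 0 a, g t = c) := by
  have hrefl : MapsTo (a - ·) (Icc 0 a) (Icc 0 a) := fun t ht =>
    ⟨sub_nonneg.2 ht.2, sub_le_self a ht.1⟩
  have hfc' : ContinuousOn (fun t => f (a - t)) (Icc 0 a) :=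
    hfc.comp (continuousOn_const.sub continuousOn_id) hrefl
  have hgc' : ContinuousOn (fun t => g (a - t)) (Icc 0 a) :=
    hgc.comp (continuousOn_const.sub continuousOn_id) hrefl
  have hp : ∀ t ∈ Icc 0 a, 0 ≤ (f t - f (a - t)) * (g (a - t) - g t) := fun t ht => by
    rw [← neg_sub (g t), mul_neg, neg_nonneg]
    exact (hf.antivaryOn hg).sub_mul_sub_nonpos (hrefl ht) ht
  have hpc : ContinuousOn (fun t => (f t - f (a - t)) * (g (a - t) - g t)) (Icc 0 a) :=
    (hfc.sub hfc').mul (hgc'.sub hgc)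
  have hI : IntervalIntegrable (fun t => f t * g t) MeasureTheory.volume 0 a :=
    (hfc.mul hgc).intervalIntegrable_of_Icc ha.le
  have hJ : IntervalIntegrable (fun t => f t * g (0 + a - t)) MeasureTheory.volume 0 a := by
    simp only [zero_add]
    exact (hfc.mul hgc').intervalIntegrable_of_Icc ha.le
  have hp_integral := integral_sub_mul_sub_reflect hI hJ
  rw [← sub_mul_sub_reflect_eq_zero_iff ha.le hf hg]
  simp only [zero_add] at hp_integral ⊢
  rw [← integral_eq_zero_iff_of_continuousOn_of_nonneg ha hpc hp, hp_integral, mul_eq_zero,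
    sub_eq_zero, or_iff_right two_ne_zero, eq_comm]
end

section
/- For all t ∈ ℝ, φ(t+T) = −φ(t) (the function φ is T-antiperiodic), and moreover φ(T−t) = −φ(t) for all t ∈ ℝ (φ is odd with respect to the transformation t ↦ T−t). -/
open Real Set

noncomputable def vfAux (C : ℝ) : ℝ × ℝ → ℝ × ℝ :=
  fun p => (p.2, Real.sin p.1 * p.2 ^ 2 / Real.cos p.1 - Real.sin p.1 * C / Real.cos p.1 ^ 7)

lemma vfAux_contDiffOn (C : ℝ) :
    ContDiffOn ℝ 1 (vfAux C) {p : ℝ × ℝ | Real.cos p.1 ≠ 0} := by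
  apply ContDiffOn.prodMk
  · exact (contDiff_snd).contDiffOn
  · apply ContDiffOn.sub
    · exact ContDiffOn.div
        (((Real.contDiff_sin.comp contDiff_fst).mul (contDiff_snd.pow 2)).contDiffOn)
        ((Real.contDiff_cos.comp contDiff_fst).contDiffOn)
        (fun p hp => hp)
    · exact ContDiffOn.div
        (((Real.contDiff_sin.comp contDiff_fst).mul contDiff_const).contDiffOn)
        (((Real.contDiff_cos.comp contDiff_fst).pow 7).contDiffOn)
        (fun p hp => pow_ne_zero _ hp)

lemma vfAux_lipschitz (C c M : ℝ) (hc0 : 0 < c) (hc : c < π/2) (hM : 0 < M) :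
    ∃ K : NNReal, LipschitzOnWith K (vfAux C) (Icc (-c) c ×ˢ Icc (-M) M) := by
  set S : Set (ℝ × ℝ) := Icc (-c) c ×ˢ Icc (-M) M with hS
  set U : Set (ℝ × ℝ) := {p : ℝ × ℝ | Real.cos p.1 ≠ 0} with hU
  have hUopen : IsOpen U := by
    have : U = (fun p : ℝ × ℝ => Real.cos p.1) ⁻¹' {(0:ℝ)}ᶜ := by
      ext p; simp [hU]
    rw [this]
    exact (Real.continuous_cos.comp continuous_fst).isOpen_preimage _ isOpen_compl_singleton
  have hSU : S ⊆ U := by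
    rintro ⟨x, y⟩ ⟨hx, _⟩
    have : 0 < Real.cos x := by
      apply Real.cos_pos_of_mem_Ioo
      constructor
      · linarith [hx.1]
      · linarith [hx.2]
    exact ne_of_gt this
  have hcomp : IsCompact S := (isCompact_Icc).prod isCompact_Icc
  have hconv : Convex ℝ S := (convex_Icc _ _).prod (convex_Icc _ _)
  have hcd := vfAux_contDiffOn C
  have hdiff : ∀ p ∈ S, DifferentiableAt ℝ (vfAux C) p := fun p hp =>
    (hcd.contDiffAt (hUopen.mem_nhds (hSU hp))).differentiableAt one_ne_zero
  have hfc : ContinuousOn (fun p => ‖fderiv ℝ (vfAux C) p‖) S :=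
    ((hcd.continuousOn_fderiv_of_isOpen hUopen le_rfl).mono hSU).norm
  obtain ⟨B, hB⟩ := hcomp.exists_bound_of_continuousOn hfc
  have hud : UniqueDiffOn ℝ S := by
    apply uniqueDiffOn_convex hconv
    rw [hS, interior_prod_eq, interior_Icc, interior_Icc]
    exact (nonempty_Ioo.2 (by linarith)).prod (nonempty_Ioo.2 (by linarith))
  refine ⟨⟨max B 0, le_max_right _ _⟩, ?_⟩
  apply hconv.lipschitzOnWith_of_nnnorm_fderivWithin_le
    (fun p hp => (hdiff p hp).differentiableWithinAt)
  intro p hp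
  rw [(hdiff p hp).fderivWithin (hud p hp)]
  have := hB p hp
  simp only [norm_norm] at this
  apply NNReal.coe_le_coe.1
  exact (by simpa only [coe_nnnorm] using this.trans (le_max_left B 0) :
    (‖fderiv ℝ (vfAux C) p‖₊ : ℝ) ≤ max B 0)

lemma eq_of_solutions (C : ℝ) (x y : ℝ → ℝ × ℝ)
    (hx : ∀ t, HasDerivAt x (vfAux C (x t)) t)
    (hy : ∀ t, HasDerivAt y (vfAux C (y t)) t)
    (hx1 : ∀ t, |(x t).1| < π/2) (hy1 : ∀ t, |(y t).1| < π/2)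
    (t₀ : ℝ) (h0 : x t₀ = y t₀) : ∀ t, x t = y t := by
  intro t
  set a := min t t₀ - 1 with ha
  set d := max t t₀ + 1 with hd
  have hxc : Continuous x := continuous_iff_continuousAt.2 fun s => (hx s).continuousAt
  have hyc : Continuous y := continuous_iff_continuousAt.2 fun s => (hy s).continuousAt
  have htI : t ∈ Icc a d := mem_Icc.2
    ⟨by linarith [min_le_left t t₀], by linarith [le_max_left t t₀]⟩
  have ht₀ : t₀ ∈ Ioo a d := mem_Ioo.2
    ⟨by linarith [min_le_right t t₀], by linarith [le_max_right t t₀]⟩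
  have hI : IsCompact (Icc a d) := isCompact_Icc
  have hne : (Icc a d).Nonempty := ⟨t, htI⟩
  have hg : Continuous fun s => max |(x s).1| |(y s).1| :=
    ((continuous_fst.comp hxc).abs).max ((continuous_fst.comp hyc).abs)
  obtain ⟨s₀, hs₀I, hs₀max⟩ := hI.exists_isMaxOn hne hg.continuousOn
  set c := max |(x s₀).1| |(y s₀).1| with hc
  have hclt : c < π/2 := max_lt (hx1 _) (hy1 _)
  have hc0 : (0:ℝ) ≤ c := le_max_of_le_left (abs_nonneg _)
  set c' := (c + π/2)/2 with hc'
  have hcc' : c ≤ c' := by rw [hc']; linarith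
  obtain ⟨M₂, hM₂⟩ := hI.exists_bound_of_continuousOn ((continuous_snd.comp hxc).continuousOn)
  obtain ⟨M₃, hM₃⟩ := hI.exists_bound_of_continuousOn ((continuous_snd.comp hyc).continuousOn)
  set M := max M₂ M₃ + 1 with hM
  have hM₂0 : (0:ℝ) ≤ M₂ := le_trans (norm_nonneg _) (hM₂ t htI)
  obtain ⟨K, hK⟩ := vfAux_lipschitz C c' M (by rw [hc']; linarith [pi_pos])
    (by rw [hc']; linarith) (by rw [hM]; linarith [le_max_left M₂ M₃])
  have hxmem : ∀ s ∈ Ioo a d, x s ∈ Icc (-c') c' ×ˢ Icc (-M) M := by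
    intro s hs
    have hs' : s ∈ Icc a d := Ioo_subset_Icc_self hs
    have h1 : |(x s).1| ≤ c' := le_trans (le_trans (le_max_left _ _) (hs₀max hs')) hcc'
    have h2 : |(x s).2| ≤ M := by
      have := hM₂ s hs'
      rw [hM]
      calc |(x s).2| = ‖(x s).2‖ := rfl
        _ ≤ M₂ := this
        _ ≤ max M₂ M₃ + 1 := by linarith [le_max_left M₂ M₃]
    exact ⟨abs_le.1 h1, abs_le.1 h2⟩
  have hymem : ∀ s ∈ Ioo a d, y s ∈ Icc (-c') c' ×ˢ Icc (-M) M := by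
    intro s hs
    have hs' : s ∈ Icc a d := Ioo_subset_Icc_self hs
    have h1 : |(y s).1| ≤ c' := le_trans (le_trans (le_max_right _ _) (hs₀max hs')) hcc'
    have h2 : |(y s).2| ≤ M := by
      have := hM₃ s hs'
      rw [hM]
      calc |(y s).2| = ‖(y s).2‖ := rfl
        _ ≤ M₃ := this
        _ ≤ max M₂ M₃ + 1 := by linarith [le_max_right M₂ M₃]
    exact ⟨abs_le.1 h1, abs_le.1 h2⟩
  exact ODE_solution_unique_of_mem_Icc (v := fun _ => vfAux C)
    (s := fun _ => Icc (-c') c' ×ˢ Icc (-M) M) (fun _ _ => hK) ht₀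
    hxc.continuousOn (fun s _ => hx s) hxmem
    hyc.continuousOn (fun s _ => hy s) hymem h0 htI

/-- The latitude function `φ` of the geodesic `γ_b` is `T`-antiperiodic and odd
with respect to the transformation `t ↦ T − t`. -/
theorem phi_antiperiodic_and_odd
    (b : ℝ) (hb : b ∈ Set.Ioo (-(π/2)) 0)
    (φ θ : ℝ → ℝ) (hφs : ContDiff ℝ (⊤ : ℕ∞) φ) (hθs : ContDiff ℝ (⊤ : ℕ∞) θ)
    (hφ0 : φ 0 = b) (hdφ0 : deriv φ 0 = 0) (hθ0 : θ 0 = 0)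
    (hbd : ∀ t, |φ t| < π/2)
    (hθ' : ∀ t, deriv θ t = cos b ^ 2 / (2 * π * cos (φ t) ^ 4))
    (hφ' : ∀ t, (deriv φ t) ^ 2 = (cos (φ t) ^ 4 - cos b ^ 4) / (4 * π ^ 2 * cos (φ t) ^ 6))
    (hφ'' : ∀ t, deriv (deriv φ) t =
      tan (φ t) * (deriv φ t) ^ 2 - 2 * sin (φ t) * cos (φ t) * (deriv θ t) ^ 2)
    (T : ℝ) (hT : 0 < T) (hφT : φ T = -b)
    (hmono : ∀ t ∈ Set.Ioo (0:ℝ) T, 0 < deriv φ t) :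
    (∀ t, φ (t + T) = -φ t) ∧ (∀ t, φ (T - t) = -φ t) := by
  set C := cos b ^ 4 / (2 * π ^ 2) with hC
  have hπ : (π:ℝ) ≠ 0 := pi_ne_zero
  have hcosφ : ∀ t, 0 < cos (φ t) := by
    intro t
    apply cos_pos_of_mem_Ioo
    have := abs_lt.1 (hbd t)
    exact ⟨by linarith [this.1], this.2⟩
  have hdφ : ∀ t, HasDerivAt φ (deriv φ t) t :=
    fun t => (hφs.differentiable (by simp) t).hasDerivAt
  have hφ's : ContDiff ℝ (⊤ : ℕ∞) (deriv φ) := (contDiff_infty_iff_deriv.1 hφs).2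
  have hdφ' : ∀ t, HasDerivAt (deriv φ) (deriv (deriv φ) t) t :=
    fun t => (hφ's.differentiable (by simp) t).hasDerivAt
  have hE : ∀ t, deriv (deriv φ) t =
      sin (φ t) * (deriv φ t) ^ 2 / cos (φ t) - sin (φ t) * C / cos (φ t) ^ 7 := by
    intro t
    rw [hφ'' t, hθ' t, Real.tan_eq_sin_div_cos, hC]
    have h1 : cos (φ t) ≠ 0 := ne_of_gt (hcosφ t)
    field_simp
  set x : ℝ → ℝ × ℝ := fun t => (φ t, deriv φ t) with hxdef
  set y : ℝ → ℝ × ℝ := fun t => (-φ (T - t), deriv φ (T - t)) with hydef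
  set z : ℝ → ℝ × ℝ := fun t => (φ (-t), -deriv φ (-t)) with hzdef
  have hxd : ∀ t, HasDerivAt x (vfAux C (x t)) t := by
    intro t
    have h : vfAux C (x t) = (deriv φ t, deriv (deriv φ) t) := by
      simp only [vfAux, hxdef, Prod.mk.injEq]
      exact ⟨trivial, (hE t).symm⟩
    rw [h]
    exact (hdφ t).prodMk (hdφ' t)
  have hyd : ∀ t, HasDerivAt y (vfAux C (y t)) t := by
    intro t
    have hs : HasDerivAt (fun s : ℝ => T - s) (-1) t := by
      simpa using (hasDerivAt_id t).const_sub T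
    have h1 : HasDerivAt (fun s => -φ (T - s)) (deriv φ (T - t)) t := by
      have := (HasDerivAt.comp t (hdφ (T - t)) hs).neg
      exact this.congr_deriv (by ring)
    have h2 : HasDerivAt (fun s => deriv φ (T - s)) (-(deriv (deriv φ) (T - t))) t := by
      have := HasDerivAt.comp t (hdφ' (T - t)) hs
      simpa [Function.comp_def] using this
    have h : vfAux C (y t) = (deriv φ (T - t), -(deriv (deriv φ) (T - t))) := by
      simp only [vfAux, hydef, Prod.mk.injEq, sin_neg, cos_neg]
      refine ⟨trivial, ?_⟩
      rw [hE (T - t)]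
      ring
    rw [h]
    exact h1.prodMk h2
  have hzd : ∀ t, HasDerivAt z (vfAux C (z t)) t := by
    intro t
    have hs : HasDerivAt (fun s : ℝ => -s) (-1) t := hasDerivAt_neg t
    have h1 : HasDerivAt (fun s => φ (-s)) (-(deriv φ (-t))) t := by
      have := HasDerivAt.comp t (hdφ (-t)) hs
      simpa [Function.comp_def] using this
    have h2 : HasDerivAt (fun s => -deriv φ (-s)) (deriv (deriv φ) (-t)) t := by
      have := (HasDerivAt.comp t (hdφ' (-t)) hs).neg
      exact this.congr_deriv (by ring)
    have h : vfAux C (z t) = (-(deriv φ (-t)), deriv (deriv φ) (-t)) := by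
      simp only [vfAux, hzdef, Prod.mk.injEq]
      refine ⟨trivial, ?_⟩
      rw [hE (-t)]
      ring
    rw [h]
    exact h1.prodMk h2
  have hφ'T : deriv φ T = 0 := by
    have h := hφ' T
    rw [hφT, cos_neg] at h
    simp only [sub_self, zero_div] at h
    exact pow_eq_zero_iff (n := 2) (by norm_num) |>.1 h
  have heven : ∀ t, x t = z t := by
    apply eq_of_solutions C x z hxd hzd (fun t => hbd t) (fun t => hbd (-t)) 0
    simp [hxdef, hzdef, hφ0, hdφ0]
  have hodd : ∀ t, x t = y t := by
    apply eq_of_solutions C x y hxd hyd (fun t => hbd t)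
      (fun t => by simpa [hydef] using hbd (T - t)) T
    simp [hxdef, hydef, hφT, hφ'T, hφ0, hdφ0]
  have hodd' : ∀ t, φ (T - t) = -φ t := by
    intro t
    have := congrArg Prod.fst (hodd t)
    simp only [hxdef, hydef] at this
    linarith
  refine ⟨?_, hodd'⟩
  intro t
  have h1 : φ (T - (-t)) = -φ (-t) := hodd' (-t)
  have h2 : φ (-t) = φ t := by
    have := congrArg Prod.fst (heven t)
    simp only [hxdef, hzdef] at this
    linarith
  rw [show t + T = T - (-t) by ring, h1, h2]
end

section
/- For all t ∈ ℝ, θ(t+T) = θ(t) + θ(T). -/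
open Real Set Topology Filter

/-- The longitude function `θ` of the geodesic `γ_b` satisfies
`θ(t + T) = θ(t) + θ(T)` for all `t`. -/
theorem theta_quasi_periodic
    (b : ℝ) (hb : b ∈ Set.Ioo (-(π/2)) 0)
    (φ θ : ℝ → ℝ) (hφs : ContDiff ℝ (⊤ : ℕ∞) φ) (hθs : ContDiff ℝ (⊤ : ℕ∞) θ)
    (hφ0 : φ 0 = b) (hdφ0 : deriv φ 0 = 0) (hθ0 : θ 0 = 0)
    (hbd : ∀ t, |φ t| < π/2)
    (hθ' : ∀ t, deriv θ t = cos b ^ 2 / (2 * π * cos (φ t) ^ 4))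
    (hφ' : ∀ t, (deriv φ t) ^ 2 = (cos (φ t) ^ 4 - cos b ^ 4) / (4 * π ^ 2 * cos (φ t) ^ 6))
    (hφ'' : ∀ t, deriv (deriv φ) t =
      tan (φ t) * (deriv φ t) ^ 2 - 2 * sin (φ t) * cos (φ t) * (deriv θ t) ^ 2)
    (T : ℝ) (hT : 0 < T) (hφT : φ T = -b)
    (hmono : ∀ t ∈ Set.Ioo (0:ℝ) T, 0 < deriv φ t) :
    ∀ t, θ (t + T) = θ t + θ T := by
  -- cosine of φ is everywhere positive
  have hcos : ∀ t, 0 < cos (φ t) := by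
    intro t
    have h := abs_lt.1 (hbd t)
    exact Real.cos_pos_of_mem_Ioo ⟨by linarith [h.1], h.2⟩
  -- φ' T = 0
  have hdφT : deriv φ T = 0 := by
    have h := hφ' T
    rw [hφT, Real.cos_neg, sub_self, zero_div] at h
    exact pow_eq_zero_iff two_ne_zero |>.mp h
  -- the vector field of the second-order ODE, as a first-order system on ℝ × ℝ
  set F : ℝ × ℝ → ℝ := fun p =>
    tan p.1 * p.2 ^ 2 - 2 * sin p.1 * cos p.1 * (cos b ^ 2 / (2 * π * cos p.1 ^ 4)) ^ 2 with hF
  set V : ℝ × ℝ → ℝ × ℝ := fun p => (p.2, F p) with hV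
  have hFodd : ∀ p : ℝ × ℝ, F (-p.1, -p.2) = -F p := by
    intro p
    simp only [hF, Real.tan_neg, Real.sin_neg, Real.cos_neg]
    ring
  -- differentiability facts
  have hφd : Differentiable ℝ φ := hφs.differentiable (by simp)
  have hφ'c : ContDiff ℝ (⊤ : ℕ∞) (deriv φ) := (contDiff_infty_iff_deriv.mp hφs).2
  have hφ'd : Differentiable ℝ (deriv φ) := hφ'c.differentiable (by simp)
  -- the two solution curves
  set u : ℝ → ℝ × ℝ := fun t => (φ t, deriv φ t) with hu
  set w : ℝ → ℝ × ℝ := fun t => (-φ (t + T), -deriv φ (t + T)) with hw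
  have hFu : ∀ t, F (φ t, deriv φ t) = deriv (deriv φ) t := by
    intro t
    simp only [hF]
    rw [hφ'' t, hθ' t]
  -- derivative of shifted φ
  have hshiftd : ∀ t, HasDerivAt (fun s => φ (s + T)) (deriv φ (t + T)) t := by
    intro t
    simpa [Function.comp_def] using (hφd (t + T)).hasDerivAt.comp t ((hasDerivAt_id t).add_const T)
  have hshiftd' : ∀ t, HasDerivAt (fun s => deriv φ (s + T)) (deriv (deriv φ) (t + T)) t := by
    intro t
    simpa [Function.comp_def] using (hφ'd (t + T)).hasDerivAt.comp t ((hasDerivAt_id t).add_const T)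
  have hu' : ∀ t, HasDerivAt u (V (u t)) t := by
    intro t
    have hVe : V (u t) = (deriv φ t, deriv (deriv φ) t) := by
      simp only [hV, hu]
      rw [hFu t]
    rw [hVe]
    exact ((hφd t).hasDerivAt).prodMk ((hφ'd t).hasDerivAt)
  have hw' : ∀ t, HasDerivAt w (V (w t)) t := by
    intro t
    have hVe : V (w t) = (-deriv φ (t + T), -deriv (deriv φ) (t + T)) := by
      simp only [hV, hw]
      rw [hFodd (φ (t + T), deriv φ (t + T)), hFu (t + T)]
    rw [hVe]
    exact ((hshiftd t).neg).prodMk ((hshiftd' t).neg)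
  -- continuity of the curves
  have hucont : Continuous u := hφs.continuous.prodMk hφ'c.continuous
  have hwcont : Continuous w := by
    have hs : Continuous fun t : ℝ => t + T := continuous_id.add continuous_const
    exact ((hφs.continuous.comp hs).neg).prodMk ((hφ'c.continuous.comp hs).neg)
  -- the agreement set is clopen, hence everything
  set S : Set ℝ := {t | u t = w t} with hS
  have hS0 : (0 : ℝ) ∈ S := by
    simp only [hS, mem_setOf_eq, hu, hw, zero_add, hφ0, hdφ0, hφT, hdφT]
    simp
  have hSclosed : IsClosed S := isClosed_eq hucont hwcont
  have hSopen : IsOpen S := by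
    rw [isOpen_iff_mem_nhds]
    intro t₀ ht₀
    have hcost : cos (φ t₀) ≠ 0 := (hcos t₀).ne'
    -- V is C¹ near u t₀
    have hVc : ContDiffAt ℝ 1 V (u t₀) := by
      have h1 : ContDiffAt ℝ 1 (fun p : ℝ × ℝ => tan p.1) (u t₀) :=
        ContDiffAt.comp (g := Real.tan) (u t₀) (Real.contDiffAt_tan.mpr hcost) contDiffAt_fst
      have h2 : ContDiffAt ℝ 1 (fun p : ℝ × ℝ => p.2 ^ 2) (u t₀) := contDiffAt_snd.pow 2
      have h3 : ContDiffAt ℝ 1 (fun p : ℝ × ℝ => 2 * sin p.1 * cos p.1) (u t₀) :=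
        ((contDiffAt_const.mul (Real.contDiff_sin.contDiffAt.comp (u t₀) contDiffAt_fst)).mul
          (Real.contDiff_cos.contDiffAt.comp (u t₀) contDiffAt_fst))
      have hden : ContDiffAt ℝ 1 (fun p : ℝ × ℝ => 2 * π * cos p.1 ^ 4) (u t₀) :=
        contDiffAt_const.mul ((Real.contDiff_cos.contDiffAt.comp (u t₀) contDiffAt_fst).pow 4)
      have hdnz : (2 * π * cos ((u t₀).1) ^ 4) ≠ 0 := by
        have : (u t₀).1 = φ t₀ := rfl
        rw [this]
        positivity
      have h4 : ContDiffAt ℝ 1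
          (fun p : ℝ × ℝ => (cos b ^ 2 / (2 * π * cos p.1 ^ 4)) ^ 2) (u t₀) :=
        (contDiffAt_const.div hden hdnz).pow 2
      exact contDiffAt_snd.prodMk ((h1.mul h2).sub (h3.mul h4))
    obtain ⟨K, s, hsmem, hlip⟩ := hVc.exists_lipschitzOnWith
    have hus : ∀ᶠ t in 𝓝 t₀, u t ∈ s := hucont.continuousAt.preimage_mem_nhds hsmem
    have hws : ∀ᶠ t in 𝓝 t₀, w t ∈ s := by
      have : w t₀ = u t₀ := ht₀.symm
      exact hwcont.continuousAt.preimage_mem_nhds (this ▸ hsmem)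
    have heq : u =ᶠ[𝓝 t₀] w := by
      apply ODE_solution_unique_of_eventually (v := fun _ : ℝ => V) (s := fun _ : ℝ => s)
        (Filter.Eventually.of_forall fun _ => hlip)
      · exact hus.mono fun t ht => ⟨hu' t, ht⟩
      · exact hws.mono fun t ht => ⟨hw' t, ht⟩
      · exact ht₀
    exact heq
  have hSuniv : S = univ := IsClopen.eq_univ ⟨hSclosed, hSopen⟩ ⟨0, hS0⟩
  have hshift : ∀ t, φ (t + T) = -φ t := by
    intro t
    have ht : t ∈ S := hSuniv ▸ mem_univ t
    have := congrArg Prod.fst ht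
    simp only [hu, hw] at this
    linarith [this]
  -- now θ(·+T) - θ has zero derivative
  have hθd : Differentiable ℝ θ := hθs.differentiable (by simp)
  have hθshiftd : ∀ t, HasDerivAt (fun s => θ (s + T)) (deriv θ (t + T)) t := by
    intro t
    simpa [Function.comp_def] using (hθd (t + T)).hasDerivAt.comp t ((hasDerivAt_id t).add_const T)
  have hh : ∀ t, HasDerivAt (fun s => θ (s + T) - θ s) 0 t := by
    intro t
    have h1 := (hθshiftd t).sub (hθd t).hasDerivAt
    have he : deriv θ (t + T) - deriv θ t = 0 := by
      rw [hθ' (t + T), hθ' t, hshift t, Real.cos_neg, sub_self]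
    rwa [he] at h1
  intro t
  have hconst := is_const_of_deriv_eq_zero (f := fun s => θ (s + T) - θ s)
    (fun x => (hh x).differentiableAt) (fun x => (hh x).deriv) t 0
  simp only [zero_add, hθ0, sub_zero] at hconst
  linarith [hconst]
end

section
/- Let q be a positive integer and set t₀ = 2qT. Then the set of zeros of φ in [0, t₀) is exactly {(2d+1)·T/2 : d = 0, 1, …, 2q−1} (so φ has exactly 2q zeros there), and the set of zeros of φ' in [0, t₀) is exactly {d·T : d = 0, 1, …, 2q−1} (so φ' has exactly 2q zeros there). -/
open Real Set

set_option maxHeartbeats 1000000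

noncomputable def Hfun (b : ℝ) (x u : ℝ) : ℝ :=
  Real.tan x * u ^ 2 - 2 * Real.sin x * Real.cos x * (Real.cos b ^ 2 / (2 * π * Real.cos x ^ 4)) ^ 2

noncomputable def Vfun (b : ℝ) (p : ℝ × ℝ) : ℝ × ℝ := (p.2, Hfun b p.1 p.2)

lemma Hfun_odd (b x u : ℝ) : Hfun b (-x) u = -Hfun b x u := by
  simp [Hfun, Real.tan_neg]; ring

lemma Hfun_even (b x u : ℝ) : Hfun b x (-u) = Hfun b x u := by
  simp [Hfun]

lemma Vfun_contDiffOn (b : ℝ) :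
    ContDiffOn ℝ (⊤ : ℕ∞) (Vfun b) {p : ℝ × ℝ | Real.cos p.1 ≠ 0} := by
  set U : Set (ℝ × ℝ) := {p : ℝ × ℝ | Real.cos p.1 ≠ 0}
  have htan : ContDiffOn ℝ (⊤ : ℕ∞) (fun p : ℝ × ℝ => Real.tan p.1) U := by
    intro p hp
    exact ((Real.contDiffAt_tan.mpr hp).comp p contDiff_fst.contDiffAt).contDiffWithinAt
  have hc : ContDiff ℝ (⊤ : ℕ∞) (fun p : ℝ × ℝ => Real.cos p.1) :=
    Real.contDiff_cos.comp contDiff_fst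
  have hs : ContDiff ℝ (⊤ : ℕ∞) (fun p : ℝ × ℝ => Real.sin p.1) :=
    Real.contDiff_sin.comp contDiff_fst
  have hden : ContDiffOn ℝ (⊤ : ℕ∞) (fun p : ℝ × ℝ =>
      Real.cos b ^ 2 / (2 * π * Real.cos p.1 ^ 4)) U := by
    apply ContDiffOn.div contDiffOn_const
    · exact (contDiffOn_const.mul (hc.contDiffOn.pow 4))
    · intro p hp
      exact mul_ne_zero (by positivity) (pow_ne_zero 4 hp)
  apply ContDiffOn.prodMk contDiff_snd.contDiffOn
  exact (htan.mul ((contDiff_snd.pow 2).contDiffOn)).sub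
    (((contDiffOn_const.mul hs.contDiffOn).mul hc.contDiffOn).mul (hden.pow 2))

lemma ode_unique {b : ℝ} {s : Set (ℝ × ℝ)} (hs1 : Convex ℝ s) (hs2 : IsCompact s)
    (hsub : ∀ p ∈ s, Real.cos p.1 ≠ 0)
    {f g : ℝ → ℝ × ℝ}
    (hf : ∀ t, HasDerivAt f (Vfun b (f t)) t) (hfs : ∀ t, f t ∈ s)
    (hg : ∀ t, HasDerivAt g (Vfun b (g t)) t) (hgs : ∀ t, g t ∈ s)
    (h0 : f 0 = g 0) : ∀ t, f t = g t := by
  have hU : IsOpen {p : ℝ × ℝ | Real.cos p.1 ≠ 0} := by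
    have : {p : ℝ × ℝ | Real.cos p.1 ≠ 0} = (fun p : ℝ × ℝ => Real.cos p.1) ⁻¹' {(0:ℝ)}ᶜ := by
      ext p; simp
    rw [this]
    exact (isOpen_compl_singleton).preimage (Real.continuous_cos.comp continuous_fst)
  have hVc := Vfun_contDiffOn b
  have hdiff : ∀ p ∈ s, DifferentiableAt ℝ (Vfun b) p := fun p hp =>
    ((hVc.contDiffAt (hU.mem_nhds (hsub p hp))).differentiableAt (by simp))
  have hcont : ContinuousOn (fderiv ℝ (Vfun b)) {p : ℝ × ℝ | Real.cos p.1 ≠ 0} :=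
    hVc.continuousOn_fderiv_of_isOpen hU (mod_cast le_top)
  obtain ⟨C, hC⟩ := hs2.exists_bound_of_continuousOn (hcont.mono hsub)
  set K : NNReal := ⟨max C 0, le_max_right _ _⟩ with hK
  have hbound : ∀ p ∈ s, ‖fderiv ℝ (Vfun b) p‖₊ ≤ K := by
    intro p hp
    rw [← NNReal.coe_le_coe]
    exact (hC p hp).trans (le_max_left _ _)
  have hLip : LipschitzOnWith K (Vfun b) s :=
    Convex.lipschitzOnWith_of_nnnorm_fderiv_le hdiff hbound hs1
  intro t
  have hmem : (0:ℝ) ∈ Ioo (-(|t|+1)) (|t|+1) := by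
    constructor <;> [nlinarith [abs_nonneg t]; nlinarith [abs_nonneg t]]
  have htmem : t ∈ Ioo (-(|t|+1)) (|t|+1) := by
    constructor <;> [nlinarith [neg_abs_le t]; nlinarith [le_abs_self t]]
  exact ODE_solution_unique_of_mem_Ioo (v := fun _ => Vfun b) (s := fun _ => s)
    (fun _ _ => hLip) hmem (fun u _ => ⟨hf u, hfs u⟩) (fun u _ => ⟨hg u, hgs u⟩) h0 htmem

/-- On `[0, t₀)` with `t₀ = 2qT`, the zeros of `φ` are exactly the points
`(2d+1)T/2`, `d = 0, …, 2q−1`, and the zeros of `φ'` are exactly the points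
`dT`, `d = 0, …, 2q−1`. -/
theorem phi_zeros
    (b : ℝ) (hb : b ∈ Set.Ioo (-(π/2)) 0)
    (φ θ : ℝ → ℝ) (hφs : ContDiff ℝ (⊤ : ℕ∞) φ) (hθs : ContDiff ℝ (⊤ : ℕ∞) θ)
    (hφ0 : φ 0 = b) (hdφ0 : deriv φ 0 = 0) (hθ0 : θ 0 = 0)
    (hbd : ∀ t, |φ t| < π/2)
    (hθ' : ∀ t, deriv θ t = cos b ^ 2 / (2 * π * cos (φ t) ^ 4))
    (hφ' : ∀ t, (deriv φ t) ^ 2 = (cos (φ t) ^ 4 - cos b ^ 4) / (4 * π ^ 2 * cos (φ t) ^ 6))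
    (hφ'' : ∀ t, deriv (deriv φ) t =
      tan (φ t) * (deriv φ t) ^ 2 - 2 * sin (φ t) * cos (φ t) * (deriv θ t) ^ 2)
    (T : ℝ) (hT : 0 < T) (hφT : φ T = -b)
    (hmono : ∀ t ∈ Set.Ioo (0:ℝ) T, 0 < deriv φ t)
    (q : ℕ) (hq : 0 < q) (t₀ : ℝ) (ht₀ : t₀ = 2 * q * T) :
    {t ∈ Set.Ico (0:ℝ) t₀ | φ t = 0}
        = (fun d : ℕ => (2 * (d:ℝ) + 1) * T / 2) '' {d : ℕ | d < 2 * q} ∧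
      {t ∈ Set.Ico (0:ℝ) t₀ | deriv φ t = 0}
        = (fun d : ℕ => (d:ℝ) * T) '' {d : ℕ | d < 2 * q} := by
  have hπ : 0 < π := pi_pos
  have hb1 : -(π/2) < b := hb.1
  have hb2 : b < 0 := hb.2
  have hcb : 0 < Real.cos b := Real.cos_pos_of_mem_Ioo ⟨hb1, by linarith⟩
  have hcφ : ∀ t, 0 < Real.cos (φ t) := fun t => Real.cos_pos_of_mem_Ioo (abs_lt.mp (hbd t))
  -- multiplied-out form of the first integral
  have e : ∀ t, (deriv φ t)^2 * (4*π^2* Real.cos (φ t)^6) = Real.cos (φ t)^4 - Real.cos b^4 := by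
    intro t
    rw [hφ' t]
    exact div_mul_cancel₀ _ (by have := hcφ t; positivity)
  have hnum : ∀ t, Real.cos b ^4 ≤ Real.cos (φ t)^4 := by
    intro t
    nlinarith [e t, mul_nonneg (sq_nonneg (deriv φ t))
      (by positivity : (0:ℝ) ≤ 4*π^2*Real.cos (φ t)^6)]
  have hcle : ∀ t, Real.cos b ≤ Real.cos (φ t) := fun t =>
    le_of_pow_le_pow_left₀ (by norm_num) (hcφ t).le (hnum t)
  have habs : ∀ t, |φ t| ≤ -b := by
    intro t
    by_contra h
    push_neg at h
    have h1 : Real.cos |φ t| < Real.cos (-b) := by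
      apply Real.strictAntiOn_cos ⟨by linarith, by linarith⟩
        ⟨abs_nonneg _, by linarith [hbd t]⟩ h
    rw [Real.cos_abs, Real.cos_neg] at h1
    exact absurd (hcle t) (not_le.mpr h1)
  have hM : ∀ t, |deriv φ t| ≤ 1/(2*π*Real.cos b) := by
    intro t
    have h4 := pow_pos (hcφ t) 4
    have h1 : (deriv φ t)^2 * (4*π^2*Real.cos (φ t)^6) ≤ Real.cos (φ t)^4 := by
      nlinarith [e t, pow_nonneg hcb.le 4]
    have h3 : (deriv φ t)^2 * (4*π^2*Real.cos (φ t)^2) ≤ 1 := by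
      nlinarith [h1, h4]
    have hsq : Real.cos b^2 ≤ Real.cos (φ t)^2 := by nlinarith [hcle t, hcb]
    have h2 : (deriv φ t)^2 * (4*π^2*Real.cos b^2) ≤ 1 := by
      nlinarith [h3, mul_nonneg (mul_nonneg (sq_nonneg (deriv φ t))
        (by positivity : (0:ℝ) ≤ 4*π^2)) (sub_nonneg.mpr hsq)]
    have hMpos : 0 < 1/(2*π*Real.cos b) := by positivity
    have hE : (1/(2*π*Real.cos b))^2 * (4*π^2*Real.cos b^2) = 1 := by
      field_simp
      ring
    have h5 : (deriv φ t)^2 ≤ (1/(2*π*Real.cos b))^2 := by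
      refine le_of_mul_le_mul_right ?_ (show (0:ℝ) < 4*π^2*Real.cos b^2 by positivity)
      rw [hE]
      exact h2
    calc |deriv φ t| ≤ |1/(2*π*Real.cos b)| := by
          apply le_of_pow_le_pow_left₀ two_ne_zero (abs_nonneg _)
          rw [sq_abs, sq_abs]
          exact h5
      _ = 1/(2*π*Real.cos b) := abs_of_pos hMpos
  have hdT : deriv φ T = 0 := by
    have h := hφ' T
    rw [hφT, Real.cos_neg, sub_self, zero_div] at h
    exact pow_eq_zero_iff two_ne_zero |>.mp h
  rw [contDiff_infty_iff_deriv] at hφs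
  obtain ⟨hφd, hφs'⟩ := hφs
  have hφd2 : Differentiable ℝ (deriv φ) := (contDiff_infty_iff_deriv.mp hφs').1
  -- the second-order ODE as a first-order system
  have hde : ∀ t, HasDerivAt (deriv φ) (Hfun b (φ t) (deriv φ t)) t := by
    intro t
    have h := (hφd2 t).hasDerivAt
    have e2 : deriv (deriv φ) t = Hfun b (φ t) (deriv φ t) := by
      rw [hφ'' t, hθ' t]; rfl
    exact e2 ▸ h
  have hode : ∀ t, HasDerivAt (fun u => (φ u, deriv φ u)) (Vfun b (φ t, deriv φ t)) t :=
    fun t => ((hφd t).hasDerivAt).prodMk (hde t)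
  set s : Set (ℝ × ℝ) :=
    Icc b (-b) ×ˢ Icc (-(1/(2*π*Real.cos b))) (1/(2*π*Real.cos b)) with hsdef
  have hs1 : Convex ℝ s := (convex_Icc _ _).prod (convex_Icc _ _)
  have hs2 : IsCompact s := (isCompact_Icc).prod isCompact_Icc
  have hsub : ∀ p ∈ s, Real.cos p.1 ≠ 0 := by
    rintro ⟨x, u⟩ ⟨hx, -⟩
    have : -(π/2) < x := lt_of_lt_of_le hb1 hx.1
    have : x < π/2 := lt_of_le_of_lt hx.2 (by linarith)
    exact ne_of_gt (Real.cos_pos_of_mem_Ioo ⟨by assumption, by assumption⟩)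
  have hmemx : ∀ x : ℝ, |x| ≤ -b → x ∈ Icc b (-b) := by
    intro x hx
    have := abs_le.mp hx
    exact ⟨by linarith [this.1], this.2⟩
  have hmem : ∀ t, (φ t, deriv φ t) ∈ s := by
    intro t
    exact ⟨hmemx _ (habs t), abs_le.mp (hM t)⟩
  -- symmetry 1: φ is even
  have heq1 := ode_unique hs1 hs2 hsub
    (f := fun u => (φ (-u), -deriv φ (-u))) (g := fun u => (φ u, deriv φ u))
    (by
      intro u
      have h1 : HasDerivAt (fun u : ℝ => φ (-u)) (-deriv φ (-u)) u := by
        have := ((hφd (-u)).hasDerivAt).comp u (hasDerivAt_neg u)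
        simpa [Function.comp_def] using this
      have h2 : HasDerivAt (fun u : ℝ => -deriv φ (-u))
          (Hfun b (φ (-u)) (-deriv φ (-u))) u := by
        have := ((hde (-u)).comp u (hasDerivAt_neg u)).neg
        rw [Hfun_even]
        simpa [Function.comp_def, Pi.neg_def] using this
      exact h1.prodMk h2)
    (by
      intro u
      have h := abs_le.mp (hM (-u))
      have h2 := abs_le.mp (habs (-u))
      show (φ (-u), -deriv φ (-u)) ∈ s
      simp only [hsdef, Set.mem_prod, Set.mem_Icc]
      exact ⟨⟨by linarith [h2.1], h2.2⟩, by linarith [h.2], by linarith [h.1]⟩)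
    hode hmem
    (by simp [hdφ0])
  have heven : ∀ t, φ (-t) = φ t := fun t => congrArg Prod.fst (heq1 t)
  have hodd : ∀ t, -deriv φ (-t) = deriv φ t := fun t => congrArg Prod.snd (heq1 t)
  -- symmetry 2: reflection about T/2
  have heq2 := ode_unique hs1 hs2 hsub
    (f := fun u => (-φ (T - u), deriv φ (T - u))) (g := fun u => (φ u, deriv φ u))
    (by
      intro u
      have hTd : HasDerivAt (fun u : ℝ => T - u) (-1) u := (hasDerivAt_id u).const_sub T
      have h1 : HasDerivAt (fun u : ℝ => -φ (T - u)) (deriv φ (T - u)) u := by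
        have := (((hφd (T - u)).hasDerivAt).comp u hTd).neg
        simpa [Function.comp_def, Pi.neg_def] using this
      have h2 : HasDerivAt (fun u : ℝ => deriv φ (T - u))
          (Hfun b (-φ (T - u)) (deriv φ (T - u))) u := by
        have := (hde (T - u)).comp u hTd
        rw [Hfun_odd]
        simpa [Function.comp_def] using this
      exact h1.prodMk h2)
    (by
      intro u
      have h := abs_le.mp (habs (T - u))
      have h2 := abs_le.mp (hM (T - u))
      show (-φ (T - u), deriv φ (T - u)) ∈ s
      simp only [hsdef, Set.mem_prod, Set.mem_Icc]
      exact ⟨⟨by linarith [h.2], by linarith [h.1]⟩, h2.1, h2.2⟩)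
    hode hmem
    (by simp [hφT, hdT, hφ0, hdφ0])
  have hrefl : ∀ t, -φ (T - t) = φ t := fun t => congrArg Prod.fst (heq2 t)
  have hrefld : ∀ t, deriv φ (T - t) = deriv φ t := fun t => congrArg Prod.snd (heq2 t)
  -- antiperiodicity
  have hanti : ∀ t, φ (t + T) = -φ t := by
    intro t
    have h1 := hrefl (t + T)
    rw [show T - (t + T) = -t by ring, heven t] at h1
    linarith
  have hantid : ∀ t, deriv φ (t + T) = -deriv φ t := by
    intro t
    have h1 := hrefld (t + T)
    rw [show T - (t + T) = -t by ring] at h1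
    have h2 := hodd t
    linarith
  have hk : ∀ (k : ℕ) (r : ℝ), φ (r + k * T) = (-1)^k * φ r := by
    intro k
    induction k with
    | zero => simp
    | succ n ih =>
      intro r
      rw [show r + ((n:ℕ)+1 : ℕ) * T = (r + n*T) + T by push_cast; ring, hanti, ih]
      push_cast
      ring
  have hkd : ∀ (k : ℕ) (r : ℝ), deriv φ (r + k * T) = (-1)^k * deriv φ r := by
    intro k
    induction k with
    | zero => simp
    | succ n ih =>
      intro r
      rw [show r + ((n:ℕ)+1 : ℕ) * T = (r + n*T) + T by push_cast; ring, hantid, ih]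
      push_cast
      ring
  have hhalf : φ (T/2) = 0 := by
    have h := hrefl (T/2)
    rw [show T - T/2 = T/2 by ring] at h
    linarith
  have sm : StrictMonoOn φ (Icc 0 T) :=
    strictMonoOn_of_deriv_pos (convex_Icc 0 T) (hφd.continuous.continuousOn)
      (by rw [interior_Icc]; exact hmono)
  have hzero_unique : ∀ r ∈ Icc (0:ℝ) T, φ r = 0 → r = T/2 := by
    intro r hr h0'
    exact sm.injOn hr ⟨by linarith, by linarith⟩ (by rw [h0', hhalf])
  have hd_unique : ∀ r, 0 ≤ r → r < T → deriv φ r = 0 → r = 0 := by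
    intro r h1 h2 h3
    by_contra h
    exact absurd h3 (ne_of_gt (hmono r ⟨lt_of_le_of_ne h1 (Ne.symm h), h2⟩))
  -- floor decomposition helper
  have hfloor : ∀ t : ℝ, 0 ≤ t → (⌊t/T⌋₊ : ℝ) * T ≤ t ∧ t < ((⌊t/T⌋₊ : ℝ) + 1) * T := by
    intro t ht
    constructor
    · exact (le_div_iff₀ hT).mp (Nat.floor_le (by positivity))
    · exact (div_lt_iff₀ hT).mp (Nat.lt_floor_add_one _)
  constructor
  · ext t
    simp only [Set.mem_setOf_eq, Set.mem_image, Set.mem_Ico]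
    constructor
    · rintro ⟨⟨ht0, htlt⟩, hz⟩
      set k := ⌊t/T⌋₊ with hkdef
      obtain ⟨hk1, hk2⟩ := hfloor t ht0
      have hk2' : t - k*T < T := by nlinarith [hk2]
      have hφt := hk k (t - k*T)
      rw [show t - k*T + k*T = t by ring] at hφt
      have hz' : φ (t - k*T) = 0 := by
        have hne : ((-1:ℝ))^k ≠ 0 := pow_ne_zero _ (by norm_num)
        rw [hz] at hφt
        exact (mul_eq_zero.mp hφt.symm).resolve_left hne
      have hr : t - k*T = T/2 := hzero_unique _ ⟨by linarith, by linarith⟩ hz'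
      refine ⟨k, ?_, ?_⟩
      · have hkT : (k:ℝ)*T < 2*(q:ℝ)*T := by
          rw [ht₀] at htlt; linarith
        have : (k:ℝ) < 2*(q:ℝ) := lt_of_mul_lt_mul_right hkT hT.le
        exact_mod_cast this
      · have : t = (k:ℝ)*T + T/2 := by linarith
        rw [this]; ring
    · rintro ⟨d, hd, rfl⟩
      have hdR : ((d:ℝ) + 1) ≤ 2*(q:ℝ) := by exact_mod_cast Nat.succ_le_of_lt hd
      refine ⟨⟨by positivity, ?_⟩, ?_⟩
      · rw [ht₀]; nlinarith [hT]
      · have h := hk d (T/2)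
        rw [hhalf, mul_zero] at h
        rw [show (2*(d:ℝ)+1)*T/2 = T/2 + d*T by ring]
        exact h
  · ext t
    simp only [Set.mem_setOf_eq, Set.mem_image, Set.mem_Ico]
    constructor
    · rintro ⟨⟨ht0, htlt⟩, hz⟩
      set k := ⌊t/T⌋₊ with hkdef
      obtain ⟨hk1, hk2⟩ := hfloor t ht0
      have hk2' : t - k*T < T := by nlinarith [hk2]
      have hφt := hkd k (t - k*T)
      rw [show t - k*T + k*T = t by ring] at hφt
      have hz' : deriv φ (t - k*T) = 0 := by
        have hne : ((-1:ℝ))^k ≠ 0 := pow_ne_zero _ (by norm_num)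
        rw [hz] at hφt
        exact (mul_eq_zero.mp hφt.symm).resolve_left hne
      have hr : t - k*T = 0 := hd_unique _ (by linarith) hk2' hz'
      refine ⟨k, ?_, by linarith⟩
      · have hkT : (k:ℝ)*T < 2*(q:ℝ)*T := by
          rw [ht₀] at htlt; linarith
        have : (k:ℝ) < 2*(q:ℝ) := lt_of_mul_lt_mul_right hkT hT.le
        exact_mod_cast this
    · rintro ⟨d, hd, rfl⟩
      have hdR : (d:ℝ) < 2*(q:ℝ) := by exact_mod_cast hd
      refine ⟨⟨by positivity, ?_⟩, ?_⟩
      · rw [ht₀]; nlinarith [hT]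
      · have h := hkd d 0
        rw [hdφ0, mul_zero] at h
        rw [show (d:ℝ)*T = 0 + d*T by ring]
        exact h
end

section
/- Let α, θ, φ, u, v be real numbers satisfying 4π²·cos²φ·u² + 4π²·cos⁴φ·v² = 1. Then the following five vectors form an orthonormal basis of Euclidean space ℝ⁵: N = (cosα·cosφ·sinθ, sinα·cosφ·sinθ, cosα·cosφ·cosθ, sinα·cosφ·cosθ, sinφ); e₁ = (−sinα·sinθ, cosα·sinθ, −sinα·cosθ, cosα·cosθ, 0); e₂ = 2π·cosφ·(cosα·(−sinφ·sinθ·u + cosφ·cosθ·v), sinα·(−sinφ·sinθ·u + cosφ·cosθ·v), cosα·(−sinφ·cosθ·u − cosφ·sinθ·v), sinα·(−sinφ·cosθ·u − cosφ·sinθ·v), cosφ·u); n₁ = (sinα·cosθ, −cosα·cosθ, −sinα·sinθ, cosα·sinθ, 0); n₂ = 2π·cosφ·(−cosα·(cosθ·u + sinθ·sinφ·cosφ·v), −sinα·(cosθ·u + sinθ·sinφ·cosφ·v), cosα·(sinθ·u − cosθ·sinφ·cosφ·v), sinα·(sinθ·u − cosθ·sinφ·cosφ·v), cos²φ·v). 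-/
open Real Set

set_option maxHeartbeats 2000000 in
/-- The frame `N, e₁, e₂, n₁, n₂` adapted to the bipolar surface to an Otsuki torus
is an orthonormal basis of Euclidean `ℝ⁵`. -/
theorem orthonormal_frame
    (α θ φ u v : ℝ)
    (huv : 4 * π ^ 2 * cos φ ^ 2 * u ^ 2 + 4 * π ^ 2 * cos φ ^ 4 * v ^ 2 = 1)
    (N e₁ e₂ n₁ n₂ : EuclideanSpace ℝ (Fin 5))
    (hN : N = (WithLp.equiv 2 (Fin 5 → ℝ)).symm
      ![cos α * cos φ * sin θ, sin α * cos φ * sin θ,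
        cos α * cos φ * cos θ, sin α * cos φ * cos θ, sin φ])
    (he₁ : e₁ = (WithLp.equiv 2 (Fin 5 → ℝ)).symm
      ![-sin α * sin θ, cos α * sin θ, -sin α * cos θ, cos α * cos θ, 0])
    (he₂ : e₂ = (WithLp.equiv 2 (Fin 5 → ℝ)).symm
      ![2 * π * cos φ * (cos α * (-sin φ * sin θ * u + cos φ * cos θ * v)),
        2 * π * cos φ * (sin α * (-sin φ * sin θ * u + cos φ * cos θ * v)),
        2 * π * cos φ * (cos α * (-sin φ * cos θ * u - cos φ * sin θ * v)),
        2 * π * cos φ * (sin α * (-sin φ * cos θ * u - cos φ * sin θ * v)),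
        2 * π * cos φ * (cos φ * u)])
    (hn₁ : n₁ = (WithLp.equiv 2 (Fin 5 → ℝ)).symm
      ![sin α * cos θ, -cos α * cos θ, -sin α * sin θ, cos α * sin θ, 0])
    (hn₂ : n₂ = (WithLp.equiv 2 (Fin 5 → ℝ)).symm
      ![2 * π * cos φ * (-cos α * (cos θ * u + sin θ * sin φ * cos φ * v)),
        2 * π * cos φ * (-sin α * (cos θ * u + sin θ * sin φ * cos φ * v)),
        2 * π * cos φ * (cos α * (sin θ * u - cos θ * sin φ * cos φ * v)),
        2 * π * cos φ * (sin α * (sin θ * u - cos θ * sin φ * cos φ * v)),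
        2 * π * cos φ * (cos φ ^ 2 * v)]) :
    Orthonormal ℝ ![N, e₁, e₂, n₁, n₂] ∧
      Submodule.span ℝ (Set.range ![N, e₁, e₂, n₁, n₂]) = ⊤ := by
  have h1 := sin_sq_add_cos_sq α
  have h2 := sin_sq_add_cos_sq θ
  have h3 := sin_sq_add_cos_sq φ
  have horth : Orthonormal ℝ ![N, e₁, e₂, n₁, n₂] := by
    rw [orthonormal_iff_ite]
    intro i j
    subst hN he₁ he₂ hn₁ hn₂
    fin_cases i <;> fin_cases j <;>
      simp [WithLp.equiv_symm_apply, PiLp.toLp_apply, PiLp.inner_apply, RCLike.inner_apply,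
        Fin.sum_univ_five, -inner_self_eq_norm_sq_to_K]
    all_goals first
      | ring1
      | linear_combination (cos φ ^ 2 * (sin θ ^ 2 + cos θ ^ 2)) * h1 + cos φ ^ 2 * h2 + h3
      | linear_combination (sin θ ^ 2 + cos θ ^ 2) * h1 + h2
      | linear_combination (2 * π * cos φ ^ 2 * (sin θ * (-sin φ * sin θ * u + cos φ * cos θ * v)
            + cos θ * (-sin φ * cos θ * u - cos φ * sin θ * v))) * h1
          - 2 * π * cos φ ^ 2 * sin φ * u * h2
      | linear_combination (2 * π * cos φ ^ 2 * (-sin θ * (cos θ * u + sin θ * sin φ * cos φ * v)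
            + cos θ * (sin θ * u - cos θ * sin φ * cos φ * v))) * h1
          - 2 * π * cos φ ^ 3 * sin φ * v * h2
      | linear_combination (4 * π ^ 2 * cos φ ^ 2 * ((-sin φ * sin θ * u + cos φ * cos θ * v) ^ 2
            + (-sin φ * cos θ * u - cos φ * sin θ * v) ^ 2)) * h1
          + (4 * π ^ 2 * cos φ ^ 2 * (sin φ ^ 2 * u ^ 2 + cos φ ^ 2 * v ^ 2)) * h2
          + (4 * π ^ 2 * cos φ ^ 2 * u ^ 2) * h3 + huv
      | linear_combination (4 * π ^ 2 * cos φ ^ 2 *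
            (-(-sin φ * sin θ * u + cos φ * cos θ * v) * (cos θ * u + sin θ * sin φ * cos φ * v)
            + (-sin φ * cos θ * u - cos φ * sin θ * v) * (sin θ * u - cos θ * sin φ * cos φ * v))) * h1
          + (4 * π ^ 2 * cos φ ^ 3 * u * v * (sin φ ^ 2 - 1)) * h2
          + (4 * π ^ 2 * cos φ ^ 3 * u * v) * h3
      | linear_combination (4 * π ^ 2 * cos φ ^ 2 * ((cos θ * u + sin θ * sin φ * cos φ * v) ^ 2
            + (sin θ * u - cos θ * sin φ * cos φ * v) ^ 2)) * h1
          + (4 * π ^ 2 * cos φ ^ 2 * (u ^ 2 + sin φ ^ 2 * cos φ ^ 2 * v ^ 2)) * h2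
          + (4 * π ^ 2 * cos φ ^ 4 * v ^ 2) * h3 + huv
  refine ⟨horth, ?_⟩
  apply LinearIndependent.span_eq_top_of_card_eq_finrank horth.linearIndependent
  simp [finrank_euclideanSpace]
end

section
/- Let l be a real number with l ≥ 3, let b ∈ (−π/2, 0), and let φ be a real number with |φ| ≤ −b. Then (l − √(1 − cos⁴b/cos⁴φ))² > 2·(cos²φ + cos⁴b/cos⁴φ). -/
/-!
Put `t = cos⁴b / cos⁴φ`. Since `|φ| ≤ -b < π/2`, monotonicity of `cos` on `[0, π]` gives
`0 < cos b ≤ cos φ`, so `0 < t ≤ 1`. Then `√(1 - t) < 1`, so the left side exceeds `(3 - 1)² = 4`,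
while `cos²φ + t ≤ 2` bounds the right side by `4`.
-/

open Real Set

lemma Real.cos_le_cos_of_abs_le {x y : ℝ} (hxy : |x| ≤ y) (hy : y ≤ π) : cos y ≤ cos x := by
  rw [← cos_abs x]
  exact cos_le_cos_of_nonneg_of_le_pi (abs_nonneg x) hy hxy

lemma two_mul_add_lt_sq_sub_sqrt_one_sub {l t c : ℝ} (hl : 3 ≤ l) (ht₀ : 0 < t) (ht₁ : t ≤ 1)
    (hc : c ≤ 1) : 2 * (c + t) < (l - √(1 - t)) ^ 2 := by
  have hsqrt : √(1 - t) < 1 := (sqrt_lt' one_pos).2 (by linarith)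
  nlinarith

lemma pow_div_pow_mem_Ioc {a b : ℝ} (ha : 0 < a) (hab : a ≤ b) (n : ℕ) :
    a ^ n / b ^ n ∈ Ioc 0 1 := by
  have hbn : 0 < b ^ n := pow_pos (ha.trans_le hab) n
  exact ⟨by positivity, (div_le_one hbn).2 (pow_le_pow_left₀ ha.le hab n)⟩

/-- The key pointwise estimate for angular modes `l ≥ 3`:
`(l − √(1 − cos⁴b/cos⁴φ))² > 2(cos²φ + cos⁴b/cos⁴φ)`. -/
theorem key_pointwise_estimate
    (l : ℝ) (hl : 3 ≤ l)
    (b : ℝ) (hb : b ∈ Set.Ioo (-(π/2)) 0)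
    (φ : ℝ) (hφ : |φ| ≤ -b) :
    (l - Real.sqrt (1 - cos b ^ 4 / cos φ ^ 4)) ^ 2
      > 2 * (cos φ ^ 2 + cos b ^ 4 / cos φ ^ 4) := by
  have hcos_b : 0 < cos b := cos_pos_of_mem_Ioo ⟨hb.1, hb.2.trans pi_div_two_pos⟩
  have hcos_le : cos b ≤ cos φ := by
    rw [← cos_neg b]
    exact cos_le_cos_of_abs_le hφ (by linarith [hb.1, pi_pos])
  obtain ⟨ht₀, ht₁⟩ := pow_div_pow_mem_Ioc hcos_b hcos_le 4
  exact two_mul_add_lt_sq_sub_sqrt_one_sub hl ht₀ ht₁ (cos_sq_le_one φ)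
end

section
/- Let l be an integer with l ≥ 3. For every t ∈ ℝ, the symmetric 2×2 real matrix Q_l(t) with diagonal entries l²/cos²φ(t) + 4π²·φ'(t)² − 2 − 8π²·cos²φ(t)·θ'(t)² and l²/cos²φ(t) + 4π²·φ'(t)² − 2 − 8π²·sin²φ(t)·cos²φ(t)·θ'(t)², and with both off-diagonal entries equal to −4π·l·φ'(t)/cosφ(t), is positive definite. -/
open Real Set

private lemma quad_pos' {A B C x y : ℝ} (hA : 0 < A) (hdet : C ^ 2 < A * B)
    (hxy : x ≠ 0 ∨ y ≠ 0) : 0 < A * x ^ 2 + 2 * C * x * y + B * y ^ 2 := by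
  rcases eq_or_ne y 0 with hy | hy
  · subst hy
    have hx : x ≠ 0 := hxy.resolve_right (by simp)
    have : 0 < x ^ 2 := by positivity
    nlinarith
  · have hy2 : 0 < y ^ 2 := by positivity
    nlinarith [sq_nonneg (A * x + C * y), mul_pos (sub_pos.mpr hdet) hy2]

private lemma dot2 (A B C : ℝ) (x : Fin 2 → ℝ) :
    dotProduct (star x) ((!![A, C; C, B]).mulVec x)
      = A * x 0 ^ 2 + 2 * C * x 0 * x 1 + B * x 1 ^ 2 := by
  simp [dotProduct, Matrix.mulVec, Fin.sum_univ_two]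
  ring

private lemma keyDet' (u k m : ℝ) (hu : 1 ≤ u) (hk0 : 0 < k) (hk1 : k ≤ 1) (hm : 9 ≤ m) :
    4 * m * u ^ 2 * (1 - k) < (u * (m + 1 - 3 * k) - 2) * (u * (m + 1 - 3 * k) - 2 + 2 * k) := by
  have hX : 0 < u * (m + 1 - 3 * k) - 2 := by nlinarith
  nlinarith [mul_pos hk0 hX, sq_nonneg (u * (1 - 3 * k)), sq_nonneg u,
    mul_nonneg (sub_nonneg.mpr hu) (sub_nonneg.mpr hm),
    mul_nonneg (mul_nonneg (sub_nonneg.mpr hu) (sub_nonneg.mpr hu)) (sub_nonneg.mpr hm),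
    mul_nonneg (sub_nonneg.mpr hu) hk0.le, mul_nonneg hk0.le (sub_nonneg.mpr hk1)]

/-- For each integer `l ≥ 3`, the potential matrix `Q_l(t)` of the separated
Jacobi equation on a bipolar surface to an Otsuki torus is positive definite. -/
theorem Ql_posDef
    (b : ℝ) (hb : b ∈ Set.Ioo (-(π/2)) 0)
    (φ θ : ℝ → ℝ) (hφs : ContDiff ℝ (⊤ : ℕ∞) φ) (hθs : ContDiff ℝ (⊤ : ℕ∞) θ)
    (hφ0 : φ 0 = b) (hdφ0 : deriv φ 0 = 0) (hθ0 : θ 0 = 0)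
    (hbd : ∀ t, |φ t| < π/2)
    (hθ' : ∀ t, deriv θ t = cos b ^ 2 / (2 * π * cos (φ t) ^ 4))
    (hφ' : ∀ t, (deriv φ t) ^ 2 = (cos (φ t) ^ 4 - cos b ^ 4) / (4 * π ^ 2 * cos (φ t) ^ 6))
    (hφ'' : ∀ t, deriv (deriv φ) t =
      tan (φ t) * (deriv φ t) ^ 2 - 2 * sin (φ t) * cos (φ t) * (deriv θ t) ^ 2)
    (l : ℤ) (hl : 3 ≤ l) (t : ℝ) :
    (!![(l:ℝ) ^ 2 / cos (φ t) ^ 2 + 4 * π ^ 2 * (deriv φ t) ^ 2 - 2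
          - 8 * π ^ 2 * cos (φ t) ^ 2 * (deriv θ t) ^ 2,
        -(4 * π * (l:ℝ) * deriv φ t / cos (φ t));
        -(4 * π * (l:ℝ) * deriv φ t / cos (φ t)),
        (l:ℝ) ^ 2 / cos (φ t) ^ 2 + 4 * π ^ 2 * (deriv φ t) ^ 2 - 2
          - 8 * π ^ 2 * sin (φ t) ^ 2 * cos (φ t) ^ 2 * (deriv θ t) ^ 2] :
      Matrix (Fin 2) (Fin 2) ℝ).PosDef := by
  have hπ : 0 < π := Real.pi_pos
  obtain ⟨hb1, hb2⟩ := hb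
  have habs := abs_lt.mp (hbd t)
  have hc : 0 < cos (φ t) := Real.cos_pos_of_mem_Ioo ⟨habs.1, habs.2⟩
  have hcb : 0 < cos b := Real.cos_pos_of_mem_Ioo ⟨hb1, by linarith⟩
  have hc1 : cos (φ t) ≤ 1 := Real.cos_le_one _
  have hkey : cos b ^ 4 ≤ cos (φ t) ^ 4 := by
    have h1 : 0 ≤ (deriv φ t) ^ 2 := sq_nonneg _
    rw [hφ' t] at h1
    have hden : (0:ℝ) < 4 * π ^ 2 * cos (φ t) ^ 6 := by positivity
    have h2 := mul_nonneg h1 hden.le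
    rw [div_mul_cancel₀ _ (ne_of_gt hden)] at h2
    linarith
  have hm : (9:ℝ) ≤ (l:ℝ) ^ 2 := by
    have h3 : (3:ℝ) ≤ (l:ℝ) := by exact_mod_cast hl
    nlinarith
  set u : ℝ := 1 / cos (φ t) ^ 2 with hudef
  set k : ℝ := cos b ^ 4 / cos (φ t) ^ 4 with hkdef
  have hu : 1 ≤ u := by
    rw [hudef, le_div_iff₀ (by positivity)]
    nlinarith
  have hk0 : 0 < k := by rw [hkdef]; positivity
  have hk1 : k ≤ 1 := by
    rw [hkdef, div_le_one (by positivity)]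
    exact hkey
  have hAeq : (l:ℝ) ^ 2 / cos (φ t) ^ 2 + 4 * π ^ 2 * (deriv φ t) ^ 2 - 2
      - 8 * π ^ 2 * cos (φ t) ^ 2 * (deriv θ t) ^ 2
      = u * ((l:ℝ) ^ 2 + 1 - 3 * k) - 2 := by
    rw [hφ' t, hθ' t, hudef, hkdef]
    field_simp
    ring
  have hBeq : (l:ℝ) ^ 2 / cos (φ t) ^ 2 + 4 * π ^ 2 * (deriv φ t) ^ 2 - 2
      - 8 * π ^ 2 * sin (φ t) ^ 2 * cos (φ t) ^ 2 * (deriv θ t) ^ 2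
      = u * ((l:ℝ) ^ 2 + 1 - 3 * k) - 2 + 2 * k := by
    rw [hφ' t, hθ' t, Real.sin_sq, hudef, hkdef]
    field_simp
    ring
  have hC2 : (-(4 * π * (l:ℝ) * deriv φ t / cos (φ t))) ^ 2
      = 4 * (l:ℝ) ^ 2 * u ^ 2 * (1 - k) := by
    have h1 : (-(4 * π * (l:ℝ) * deriv φ t / cos (φ t))) ^ 2
        = 16 * π ^ 2 * (l:ℝ) ^ 2 * (deriv φ t) ^ 2 / cos (φ t) ^ 2 := by
      field_simp; ring
    rw [h1, hφ' t, hudef, hkdef]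
    field_simp
    ring
  have hA : 0 < u * ((l:ℝ) ^ 2 + 1 - 3 * k) - 2 := by nlinarith
  have hdet := keyDet' u k ((l:ℝ) ^ 2) hu hk0 hk1 hm
  have hA' : 0 < (l:ℝ) ^ 2 / cos (φ t) ^ 2 + 4 * π ^ 2 * (deriv φ t) ^ 2 - 2
      - 8 * π ^ 2 * cos (φ t) ^ 2 * (deriv θ t) ^ 2 := by rw [hAeq]; exact hA
  have hdet' : (-(4 * π * (l:ℝ) * deriv φ t / cos (φ t))) ^ 2
      < ((l:ℝ) ^ 2 / cos (φ t) ^ 2 + 4 * π ^ 2 * (deriv φ t) ^ 2 - 2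
          - 8 * π ^ 2 * cos (φ t) ^ 2 * (deriv θ t) ^ 2)
        * ((l:ℝ) ^ 2 / cos (φ t) ^ 2 + 4 * π ^ 2 * (deriv φ t) ^ 2 - 2
          - 8 * π ^ 2 * sin (φ t) ^ 2 * cos (φ t) ^ 2 * (deriv θ t) ^ 2) := by
    rw [hC2, hAeq, hBeq]; exact hdet
  set A := (l:ℝ) ^ 2 / cos (φ t) ^ 2 + 4 * π ^ 2 * (deriv φ t) ^ 2 - 2
      - 8 * π ^ 2 * cos (φ t) ^ 2 * (deriv θ t) ^ 2 with hAdef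
  set B := (l:ℝ) ^ 2 / cos (φ t) ^ 2 + 4 * π ^ 2 * (deriv φ t) ^ 2 - 2
      - 8 * π ^ 2 * sin (φ t) ^ 2 * cos (φ t) ^ 2 * (deriv θ t) ^ 2 with hBdef
  set C := -(4 * π * (l:ℝ) * deriv φ t / cos (φ t)) with hCdef
  refine Matrix.posDef_iff_dotProduct_mulVec.mpr ⟨?_, fun x hx => ?_⟩
  · ext i j
    fin_cases i <;> fin_cases j <;> simp [Matrix.conjTranspose_apply]
  · have hx' : x 0 ≠ 0 ∨ x 1 ≠ 0 := by
      by_contra h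
      push_neg at h
      exact hx (funext fun i => by fin_cases i <;> simp [h.1, h.2])
    have key := quad_pos' hA' hdet' hx'
    rw [dot2]
    exact key
end

section
/- Let l be an integer with l ≥ 3, let q be a positive integer, and set t₀ = 2qT. Let h : ℝ → ℝ² be a continuously differentiable t₀-periodic function that is not identically zero. Then ∫₀^{t₀} (4π²·cos²φ(t)·‖h'(t)‖² + ⟨h(t), Q_l(t)·h(t)⟩) dt > 0, where Q_l(t) is the symmetric 2×2 matrix with diagonal entries l²/cos²φ(t) + 4π²·φ'(t)² − 2 − 8π²·cos²φ(t)·θ'(t)² and l²/cos²φ(t) + 4π²·φ'(t)² − 2 − 8π²·sin²φ(t)·cos²φ(t)·θ'(t)², and off-diagonal entries −4π·l·φ'(t)/cosφ(t). Consequently the first eigenvalue λ₁(l) of the corresponding periodic matrix Sturm–Liouville problem is positive for l ≥ 3. -/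
open Real Set intervalIntegral

set_option maxHeartbeats 2000000 in
lemma otsuki_posdef_core (Q11 Q22 B x y : ℝ) (h1 : 0 < Q11) (h2 : B^2 < Q11*Q22) :
    (0 ≤ Q11*x^2 + 2*B*x*y + Q22*y^2) ∧
    ((x ≠ 0 ∨ y ≠ 0) → 0 < Q11*x^2 + 2*B*x*y + Q22*y^2) := by
  have hid : Q11 * (Q11*x^2 + 2*B*x*y + Q22*y^2)
      = (Q11*x + B*y)^2 + (Q11*Q22 - B^2)*y^2 := by ring
  have hdet : 0 ≤ (Q11*Q22 - B^2)*y^2 :=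
    mul_nonneg (by linarith) (sq_nonneg y)
  constructor
  · have h : 0 ≤ Q11 * (Q11*x^2 + 2*B*x*y + Q22*y^2) := by
      rw [hid]; exact add_nonneg (sq_nonneg _) hdet
    nlinarith [h, h1]
  · rintro (hx | hy)
    · rcases eq_or_ne y 0 with rfl | hy
      · have hx2 : 0 < x^2 := by positivity
        nlinarith
      · have hdet' : 0 < (Q11*Q22 - B^2)*y^2 :=
          mul_pos (by linarith) (by positivity)
        have hp : 0 < Q11 * (Q11*x^2 + 2*B*x*y + Q22*y^2) := by
          rw [hid]; exact add_pos_of_nonneg_of_pos (sq_nonneg _) hdet'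
        nlinarith [hp, h1]
    · have hdet' : 0 < (Q11*Q22 - B^2)*y^2 :=
        mul_pos (by linarith) (by positivity)
      have hp : 0 < Q11 * (Q11*x^2 + 2*B*x*y + Q22*y^2) := by
        rw [hid]; exact add_pos_of_nonneg_of_pos (sq_nonneg _) hdet'
      nlinarith [hp, h1]

set_option maxHeartbeats 2000000 in
lemma otsuki_keyQ (L c K A B : ℝ) (hL : 3 ≤ L) (hc : 0 < c) (hc1 : c ≤ 1) (hK : 0 < K)
    (hA0 : 0 ≤ A) (hA : A*c^6 = c^4 - K) (hB : B^2*c^2 = 4*L^2*A) :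
    0 < L^2/c^2 + A - 2 - 2*K/c^6 ∧
    B^2 < (L^2/c^2 + A - 2 - 2*K/c^6) * (L^2/c^2 + A - 2 - 2*(1-c^2)*K/c^6) := by
  have hc2 : (0:ℝ) < c^2 := by positivity
  have hc6 : (0:ℝ) < c^6 := by positivity
  have hL2 : 9 ≤ L^2 := by nlinarith
  have hKc : K ≤ c^4 := by nlinarith [mul_nonneg hA0 hc6.le]
  have hc46 : c^6 ≤ c^4 := pow_le_pow_of_le_one hc.le hc1 (by norm_num)
  have e1 : (L^2/c^2 + A - 2 - 2*K/c^6) * c^6 = L^2*c^4 + c^4 - 3*K - 2*c^6 := by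
    field_simp
    linear_combination hA
  have hQ11 : 0 < L^2/c^2 + A - 2 - 2*K/c^6 := by
    have h1 : 0 < L^2*c^4 + c^4 - 3*K - 2*c^6 := by nlinarith
    nlinarith [e1]
  refine ⟨hQ11, ?_⟩
  have e2 : (L^2/c^2 + A - 2 - 2*(1-c^2)*K/c^6) * c^6
      = L^2*c^4 + c^4 - 3*K - 2*c^6 + 2*c^2*K := by
    field_simp
    linear_combination hA
  set M3 : ℝ := L^2*c^4 + c^4 - 3*K - 2*c^6 with hM3
  have hM3pos : 0 < M3 := by rw [hM3]; nlinarith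
  have hB12 : B^2*c^12 = 4*L^2*(c^4 - K)*c^4 := by
    linear_combination c^10 * hB + 4*L^2*c^4*hA
  have hterm : 0 < 4*L^2*c^4*((2*L^2-6)*c^4 - 6*c^6) := by
    have h12 : (12:ℝ)*c^6 ≤ (2*L^2-6)*c^4 := by nlinarith
    nlinarith [pow_pos hc 4, pow_pos hc 6]
  have hF : 4*L^2*(c^4-K)*c^4 < M3^2 := by
    nlinarith [sq_nonneg (9*K - 3*((L^2+1)*c^4 - 2*c^6) + 2*L^2*c^4), hterm]
  have h2cK : 0 < 2*c^2*K*M3 := by positivity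
  have hdet12 : B^2*c^12 < M3*(M3 + 2*c^2*K) := by
    rw [hB12]; nlinarith [hF, h2cK]
  have hc12 : (0:ℝ) < c^12 := by positivity
  rw [← e2, ← e1] at hdet12
  rw [show ((L^2/c^2 + A - 2 - 2*K/c^6)*c^6) * ((L^2/c^2 + A - 2 - 2*(1-c^2)*K/c^6)*c^6)
      = ((L^2/c^2 + A - 2 - 2*K/c^6) * (L^2/c^2 + A - 2 - 2*(1-c^2)*K/c^6))*c^12 from by ring] at hdet12
  exact lt_of_mul_lt_mul_right hdet12 hc12.le

set_option maxHeartbeats 4000000 in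
/-- For angular modes `l ≥ 3` the quadratic form of the periodic matrix
Sturm–Liouville problem is positive on nonzero `t₀`-periodic `C¹` functions;
consequently every eigenvalue (in particular the first one, `λ₁(l)`) of the
periodic matrix Sturm–Liouville problem is positive. -/
theorem quadratic_form_positive_l_ge_three
    (b : ℝ) (hb : b ∈ Set.Ioo (-(π/2)) 0)
    (φ θ : ℝ → ℝ) (hφs : ContDiff ℝ (⊤ : ℕ∞) φ) (hθs : ContDiff ℝ (⊤ : ℕ∞) θ)
    (hφ0 : φ 0 = b) (hdφ0 : deriv φ 0 = 0) (hθ0 : θ 0 = 0)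
    (hbd : ∀ t, |φ t| < π/2)
    (hθ' : ∀ t, deriv θ t = cos b ^ 2 / (2 * π * cos (φ t) ^ 4))
    (hφ' : ∀ t, (deriv φ t) ^ 2 = (cos (φ t) ^ 4 - cos b ^ 4) / (4 * π ^ 2 * cos (φ t) ^ 6))
    (hφ'' : ∀ t, deriv (deriv φ) t =
      tan (φ t) * (deriv φ t) ^ 2 - 2 * sin (φ t) * cos (φ t) * (deriv θ t) ^ 2)
    (T : ℝ) (hT : 0 < T) (hφT : φ T = -b)
    (hmono : ∀ t ∈ Set.Ioo (0:ℝ) T, 0 < deriv φ t)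
    (l : ℤ) (hl : 3 ≤ l) (q : ℕ) (hq : 0 < q) (t₀ : ℝ) (ht₀ : t₀ = 2 * q * T) :
    (∀ h : ℝ → EuclideanSpace ℝ (Fin 2), ContDiff ℝ 1 h →
      (∀ t, h (t + t₀) = h t) → ¬(∀ t, h t = 0) →
      0 < ∫ t in (0:ℝ)..t₀,
        (4 * π ^ 2 * cos (φ t) ^ 2 * ‖deriv h t‖ ^ 2
          + (((l:ℝ) ^ 2 / cos (φ t) ^ 2 + 4 * π ^ 2 * (deriv φ t) ^ 2 - 2
              - 8 * π ^ 2 * cos (φ t) ^ 2 * (deriv θ t) ^ 2) * (h t 0) ^ 2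
            + 2 * (-(4 * π * (l:ℝ) * deriv φ t / cos (φ t))) * (h t 0) * (h t 1)
            + ((l:ℝ) ^ 2 / cos (φ t) ^ 2 + 4 * π ^ 2 * (deriv φ t) ^ 2 - 2
              - 8 * π ^ 2 * sin (φ t) ^ 2 * cos (φ t) ^ 2 * (deriv θ t) ^ 2)
                * (h t 1) ^ 2))) ∧
    (∀ lam : ℝ, (∃ h₁ h₂ : ℝ → ℝ, ContDiff ℝ 2 h₁ ∧ ContDiff ℝ 2 h₂ ∧
      ¬(∀ t, h₁ t = 0 ∧ h₂ t = 0) ∧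
      (∀ t, h₁ (t + t₀) = h₁ t) ∧ (∀ t, h₂ (t + t₀) = h₂ t) ∧
      (∀ t, -deriv (fun s => 4 * π ^ 2 * cos (φ s) ^ 2 * deriv h₁ s) t
        + ((l:ℝ) ^ 2 / cos (φ t) ^ 2 + 4 * π ^ 2 * (deriv φ t) ^ 2 - 2
            - 8 * π ^ 2 * cos (φ t) ^ 2 * (deriv θ t) ^ 2) * h₁ t
        - (4 * π * (l:ℝ) * deriv φ t / cos (φ t)) * h₂ t = lam * h₁ t) ∧
      (∀ t, -deriv (fun s => 4 * π ^ 2 * cos (φ s) ^ 2 * deriv h₂ s) t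
        + ((l:ℝ) ^ 2 / cos (φ t) ^ 2 + 4 * π ^ 2 * (deriv φ t) ^ 2 - 2
            - 8 * π ^ 2 * sin (φ t) ^ 2 * cos (φ t) ^ 2 * (deriv θ t) ^ 2) * h₂ t
        - (4 * π * (l:ℝ) * deriv φ t / cos (φ t)) * h₁ t = lam * h₂ t)) →
      0 < lam) := by
  have hπ : (0:ℝ) < π := pi_pos
  have hcb : 0 < cos b := cos_pos_of_mem_Ioo ⟨hb.1, lt_trans hb.2 (by positivity)⟩
  have hcpos : ∀ t, 0 < cos (φ t) := fun t =>
    cos_pos_of_mem_Ioo (Set.mem_Ioo.mpr ⟨(abs_lt.mp (hbd t)).1, (abs_lt.mp (hbd t)).2⟩)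
  have hL : (3:ℝ) ≤ (l:ℝ) := by exact_mod_cast hl
  have hqR : (0:ℝ) < (q:ℝ) := by exact_mod_cast hq
  have ht₀pos : 0 < t₀ := by rw [ht₀]; nlinarith
  -- positive definiteness of the matrix Q_l(t)
  have hkeyS : ∀ t,
      0 < ((l:ℝ) ^ 2 / cos (φ t) ^ 2 + 4 * π ^ 2 * (deriv φ t) ^ 2 - 2
            - 8 * π ^ 2 * cos (φ t) ^ 2 * (deriv θ t) ^ 2) ∧
      (-(4 * π * (l:ℝ) * deriv φ t / cos (φ t)))^2
        < ((l:ℝ) ^ 2 / cos (φ t) ^ 2 + 4 * π ^ 2 * (deriv φ t) ^ 2 - 2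
            - 8 * π ^ 2 * cos (φ t) ^ 2 * (deriv θ t) ^ 2)
          * ((l:ℝ) ^ 2 / cos (φ t) ^ 2 + 4 * π ^ 2 * (deriv φ t) ^ 2 - 2
            - 8 * π ^ 2 * sin (φ t) ^ 2 * cos (φ t) ^ 2 * (deriv θ t) ^ 2) := by
    intro t
    have hct := hcpos t
    have hA' : (4 * π ^ 2 * (deriv φ t) ^ 2) * cos (φ t)^6 = cos (φ t)^4 - cos b^4 := by
      rw [hφ' t]; field_simp
    have hB' : (-(4 * π * (l:ℝ) * deriv φ t / cos (φ t)))^2 * cos (φ t)^2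
        = 4*(l:ℝ)^2*(4 * π ^ 2 * (deriv φ t) ^ 2) := by
      field_simp
    have hK0 : (0:ℝ) < cos b^4 := by positivity
    have hA0 : (0:ℝ) ≤ 4 * π ^ 2 * (deriv φ t) ^ 2 := by positivity
    have key := otsuki_keyQ (l:ℝ) (cos (φ t)) (cos b^4) (4 * π ^ 2 * (deriv φ t) ^ 2)
      (-(4 * π * (l:ℝ) * deriv φ t / cos (φ t))) hL hct (cos_le_one _) hK0 hA0 hA' hB'
    have eq1 : 8 * π ^ 2 * cos (φ t) ^ 2 * (deriv θ t) ^ 2 = 2*(cos b^4)/cos (φ t)^6 := by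
      rw [hθ' t, div_pow]; field_simp; ring
    have eq2 : 8 * π ^ 2 * sin (φ t) ^ 2 * cos (φ t) ^ 2 * (deriv θ t) ^ 2
        = 2*(1-cos (φ t)^2)*(cos b^4)/cos (φ t)^6 := by
      rw [hθ' t, sin_sq (φ t), div_pow]; field_simp; ring
    rw [eq1, eq2]
    exact key
  constructor
  · -- Part 1 : positivity of the quadratic form
    intro h hh1 hper hne
    have hφc : Continuous φ := hφs.continuous
    have hcosc : Continuous fun t => cos (φ t) := Real.continuous_cos.comp hφc
    have hsinc : Continuous fun t => sin (φ t) := Real.continuous_sin.comp hφc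
    have hdφc : Continuous (deriv φ) := hφs.continuous_deriv (by exact_mod_cast le_top)
    have hdθc : Continuous (deriv θ) := hθs.continuous_deriv (by exact_mod_cast le_top)
    have hcne : ∀ t, cos (φ t)^2 ≠ 0 := fun t => pow_ne_zero 2 (hcpos t).ne'
    have hdh : Continuous (deriv h) := hh1.continuous_deriv le_rfl
    have hx : Continuous fun t => h t 0 := (continuous_apply (0:Fin 2)).comp ((PiLp.continuous_ofLp 2 _).comp hh1.continuous)
    have hy : Continuous fun t => h t 1 := (continuous_apply (1:Fin 2)).comp ((PiLp.continuous_ofLp 2 _).comp hh1.continuous)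
    obtain ⟨f, hfdef⟩ : ∃ f : ℝ → ℝ, f = fun t =>
        4 * π ^ 2 * cos (φ t) ^ 2 * ‖deriv h t‖ ^ 2
          + (((l:ℝ) ^ 2 / cos (φ t) ^ 2 + 4 * π ^ 2 * (deriv φ t) ^ 2 - 2
              - 8 * π ^ 2 * cos (φ t) ^ 2 * (deriv θ t) ^ 2) * (h t 0) ^ 2
            + 2 * (-(4 * π * (l:ℝ) * deriv φ t / cos (φ t))) * (h t 0) * (h t 1)
            + ((l:ℝ) ^ 2 / cos (φ t) ^ 2 + 4 * π ^ 2 * (deriv φ t) ^ 2 - 2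
              - 8 * π ^ 2 * sin (φ t) ^ 2 * cos (φ t) ^ 2 * (deriv θ t) ^ 2)
                * (h t 1) ^ 2) := ⟨_, rfl⟩
    have hQ11c : Continuous fun t => (l:ℝ) ^ 2 / cos (φ t) ^ 2 + 4 * π ^ 2 * (deriv φ t) ^ 2 - 2
        - 8 * π ^ 2 * cos (φ t) ^ 2 * (deriv θ t) ^ 2 :=
      (((continuous_const.div (hcosc.pow 2) hcne).add
        (continuous_const.mul (hdφc.pow 2))).sub continuous_const).sub
        ((continuous_const.mul (hcosc.pow 2)).mul (hdθc.pow 2))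
    have hQ22c : Continuous fun t => (l:ℝ) ^ 2 / cos (φ t) ^ 2 + 4 * π ^ 2 * (deriv φ t) ^ 2 - 2
        - 8 * π ^ 2 * sin (φ t) ^ 2 * cos (φ t) ^ 2 * (deriv θ t) ^ 2 :=
      (((continuous_const.div (hcosc.pow 2) hcne).add
        (continuous_const.mul (hdφc.pow 2))).sub continuous_const).sub
        (((continuous_const.mul (hsinc.pow 2)).mul (hcosc.pow 2)).mul (hdθc.pow 2))
    have hBc : Continuous fun t => -(4 * π * (l:ℝ) * deriv φ t / cos (φ t)) :=
      ((continuous_const.mul hdφc).div hcosc fun t => (hcpos t).ne').neg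
    have hfc : Continuous f := by
      rw [hfdef]
      exact ((continuous_const.mul (hcosc.pow 2)).mul ((hdh.norm).pow 2)).add
        (((hQ11c.mul (hx.pow 2)).add
          (((continuous_const.mul hBc).mul hx).mul hy)).add (hQ22c.mul (hy.pow 2)))
    have hfnonneg : ∀ t, 0 ≤ f t := by
      intro t
      have hq' := (otsuki_posdef_core _ _ _ (h t 0) (h t 1) (hkeyS t).1 (hkeyS t).2).1
      have hp0 : 0 ≤ 4 * π ^ 2 * cos (φ t) ^ 2 * ‖deriv h t‖ ^ 2 := by positivity
      rw [hfdef]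
      dsimp only
      linarith
    obtain ⟨t1, ht1⟩ := not_forall.mp hne
    obtain ⟨ts, htsmem, htseq⟩ :=
      (show Function.Periodic h t₀ from hper).exists_mem_Ico₀ ht₀pos t1
    have htsne : h ts ≠ 0 := htseq ▸ ht1
    have hor : h ts 0 ≠ 0 ∨ h ts 1 ≠ 0 := by
      by_contra hcon
      push_neg at hcon
      exact htsne (by ext i; fin_cases i <;> simp [hcon.1, hcon.2])
    have hfpos : 0 < f ts := by
      have hq' := (otsuki_posdef_core _ _ _ (h ts 0) (h ts 1) (hkeyS ts).1 (hkeyS ts).2).2 hor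
      have hp0 : 0 ≤ 4 * π ^ 2 * cos (φ ts) ^ 2 * ‖deriv h ts‖ ^ 2 := by positivity
      rw [hfdef]
      dsimp only
      linarith
    -- find a small interval where f is large
    have hmem : f ⁻¹' Set.Ioi (f ts / 2) ∈ nhds ts :=
      hfc.continuousAt.preimage_mem_nhds (Ioi_mem_nhds (half_lt_self hfpos))
    obtain ⟨δ, hδ0, hball⟩ := Metric.mem_nhds_iff.mp hmem
    have hball' : ∀ x, |x - ts| < δ → f ts / 2 < f x := by
      intro x hxd
      have : x ∈ Metric.ball ts δ := by simpa [Metric.mem_ball, Real.dist_eq] using hxd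
      exact hball this
    set d : ℝ := min (ts + δ/2) t₀ with hddef
    have hts0 : 0 ≤ ts := htsmem.1
    have htslt : ts < t₀ := htsmem.2
    have htd : ts < d := lt_min (by linarith) htslt
    have hdt₀ : d ≤ t₀ := min_le_right _ _
    have hfint : ∀ a b' : ℝ, IntervalIntegrable f MeasureTheory.volume a b' :=
      fun a b' => hfc.intervalIntegrable a b'
    have hsplit : ∫ t in (0:ℝ)..t₀, f t
        = (∫ t in (0:ℝ)..ts, f t) + ((∫ t in ts..d, f t) + (∫ t in d..t₀, f t)) := by
      rw [integral_add_adjacent_intervals (hfint ts d) (hfint d t₀),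
        integral_add_adjacent_intervals (hfint 0 ts) (hfint ts t₀)]
    have hI1 : 0 ≤ ∫ t in (0:ℝ)..ts, f t :=
      integral_nonneg hts0 (fun u _ => hfnonneg u)
    have hI3 : 0 ≤ ∫ t in d..t₀, f t :=
      integral_nonneg hdt₀ (fun u _ => hfnonneg u)
    have hI2 : (d - ts) * (f ts / 2) ≤ ∫ t in ts..d, f t := by
      have hconst : ∫ _t in ts..d, (f ts / 2) = (d - ts) * (f ts / 2) := by
        simp [intervalIntegral.integral_const, smul_eq_mul]
        ring
      rw [← hconst]
      apply integral_mono_on htd.le (intervalIntegrable_const) (hfint ts d)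
      intro x hxmem
      have hxd : |x - ts| < δ := by
        have h1 : ts ≤ x := hxmem.1
        have h2 : x ≤ d := hxmem.2
        have h3 : d ≤ ts + δ/2 := min_le_left _ _
        rw [abs_of_nonneg (by linarith)]
        linarith
      exact (hball' x hxd).le
    have hI2pos : 0 < (d - ts) * (f ts / 2) :=
      mul_pos (by linarith) (by linarith)
    suffices hfin : 0 < ∫ t in (0:ℝ)..t₀, f t by
      rw [hfdef] at hfin
      exact hfin
    rw [hsplit]
    have : 0 < f ts / 2 := by linarith
    nlinarith [hI1, hI3, hI2, hI2pos]
  · -- Part 2: positivity of eigenvalues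
    rintro lam ⟨h₁, h₂, hh₁, hh₂, hne, hp1, hp2, ode1, ode2⟩
    by_contra hlam
    push_neg at hlam
    have hd1 : Differentiable ℝ h₁ := hh₁.differentiable (by norm_num)
    have hd2 : Differentiable ℝ h₂ := hh₂.differentiable (by norm_num)
    have hdd1 : ContDiff ℝ 1 (deriv h₁) := by
      have hcd := (contDiff_succ_iff_deriv (n := 1)).mp (by norm_num at hh₁ ⊢; exact hh₁)
      exact hcd.2.2
    have hdd2 : ContDiff ℝ 1 (deriv h₂) := by
      have hcd := (contDiff_succ_iff_deriv (n := 1)).mp (by norm_num at hh₂ ⊢; exact hh₂)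
      exact hcd.2.2
    have hdd1' : Differentiable ℝ (deriv h₁) := hdd1.differentiable one_ne_zero
    have hdd2' : Differentiable ℝ (deriv h₂) := hdd2.differentiable one_ne_zero
    have hpdiff : Differentiable ℝ (fun s => 4 * π ^ 2 * cos (φ s) ^ 2) :=
      (contDiff_const.mul ((hφs.cos).pow 2)).differentiable (by simp)
    have hP1d : Differentiable ℝ (fun s => 4 * π ^ 2 * cos (φ s) ^ 2 * deriv h₁ s) :=
      hpdiff.mul hdd1'
    have hP2d : Differentiable ℝ (fun s => 4 * π ^ 2 * cos (φ s) ^ 2 * deriv h₂ s) :=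
      hpdiff.mul hdd2'
    have dP1 : ∀ t, deriv (fun s => 4 * π ^ 2 * cos (φ s) ^ 2 * deriv h₁ s) t
        = ((l:ℝ) ^ 2 / cos (φ t) ^ 2 + 4 * π ^ 2 * (deriv φ t) ^ 2 - 2
            - 8 * π ^ 2 * cos (φ t) ^ 2 * (deriv θ t) ^ 2) * h₁ t
          + (-(4 * π * (l:ℝ) * deriv φ t / cos (φ t))) * h₂ t - lam * h₁ t := by
      intro t; have := ode1 t; linarith
    have dP2 : ∀ t, deriv (fun s => 4 * π ^ 2 * cos (φ s) ^ 2 * deriv h₂ s) t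
        = ((l:ℝ) ^ 2 / cos (φ t) ^ 2 + 4 * π ^ 2 * (deriv φ t) ^ 2 - 2
            - 8 * π ^ 2 * sin (φ t) ^ 2 * cos (φ t) ^ 2 * (deriv θ t) ^ 2) * h₂ t
          + (-(4 * π * (l:ℝ) * deriv φ t / cos (φ t))) * h₁ t - lam * h₂ t := by
      intro t; have := ode2 t; linarith
    obtain ⟨F, hFdef⟩ : ∃ F : ℝ → ℝ, F = fun u => h₁ u * (4 * π ^ 2 * cos (φ u) ^ 2 * deriv h₁ u)
        + h₂ u * (4 * π ^ 2 * cos (φ u) ^ 2 * deriv h₂ u) := ⟨_, rfl⟩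
    obtain ⟨E, hEdef⟩ : ∃ E : ℝ → ℝ, E = fun t => 4 * π ^ 2 * cos (φ t) ^ 2 * ((deriv h₁ t)^2 + (deriv h₂ t)^2)
        + (((l:ℝ) ^ 2 / cos (φ t) ^ 2 + 4 * π ^ 2 * (deriv φ t) ^ 2 - 2
            - 8 * π ^ 2 * cos (φ t) ^ 2 * (deriv θ t) ^ 2) * (h₁ t)^2
          + 2 * (-(4 * π * (l:ℝ) * deriv φ t / cos (φ t))) * (h₁ t) * (h₂ t)
          + ((l:ℝ) ^ 2 / cos (φ t) ^ 2 + 4 * π ^ 2 * (deriv φ t) ^ 2 - 2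
            - 8 * π ^ 2 * sin (φ t) ^ 2 * cos (φ t) ^ 2 * (deriv θ t) ^ 2) * (h₂ t)^2)
        - lam * ((h₁ t)^2 + (h₂ t)^2) := ⟨_, rfl⟩
    have hFder : ∀ t, HasDerivAt F (E t) t := by
      intro t
      have H1 : HasDerivAt (fun u => h₁ u * (4 * π ^ 2 * cos (φ u) ^ 2 * deriv h₁ u))
          (deriv h₁ t * (4 * π ^ 2 * cos (φ t) ^ 2 * deriv h₁ t)
            + h₁ t * deriv (fun s => 4 * π ^ 2 * cos (φ s) ^ 2 * deriv h₁ s) t) t :=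
        ((hd1 t).hasDerivAt).mul ((hP1d t).hasDerivAt)
      have H2 : HasDerivAt (fun u => h₂ u * (4 * π ^ 2 * cos (φ u) ^ 2 * deriv h₂ u))
          (deriv h₂ t * (4 * π ^ 2 * cos (φ t) ^ 2 * deriv h₂ t)
            + h₂ t * deriv (fun s => 4 * π ^ 2 * cos (φ s) ^ 2 * deriv h₂ s) t) t :=
        ((hd2 t).hasDerivAt).mul ((hP2d t).hasDerivAt)
      rw [hFdef, hEdef]
      exact (H1.add H2).congr_deriv (by beta_reduce; rw [dP1 t, dP2 t]; ring)
    have hE0 : ∀ t, 0 ≤ E t := by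
      intro t
      have hq' := (otsuki_posdef_core _ _ _ (h₁ t) (h₂ t) (hkeyS t).1 (hkeyS t).2).1
      have hp0 : 0 ≤ 4 * π ^ 2 * cos (φ t) ^ 2 * ((deriv h₁ t)^2 + (deriv h₂ t)^2) := by positivity
      have hl0 : 0 ≤ -lam * ((h₁ t)^2 + (h₂ t)^2) :=
        mul_nonneg (by linarith) (by positivity)
      rw [hEdef]
      dsimp only
      linarith
    have hFmono : Monotone F :=
      monotone_of_deriv_nonneg (fun t => (hFder t).differentiableAt)
        (fun t => by rw [(hFder t).deriv]; exact hE0 t)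
    have hFS : ∀ u, F u = 4 * π ^ 2 * cos (φ u) ^ 2 * (h₁ u * deriv h₁ u + h₂ u * deriv h₂ u) := by
      intro u; rw [hFdef]; ring
    have hgd : ∀ u, HasDerivAt (fun v => h₁ v ^ 2 + h₂ v ^ 2)
        (2 * h₁ u * deriv h₁ u + 2 * h₂ u * deriv h₂ u) u := by
      intro u
      have hsq1 : HasDerivAt (fun v => h₁ v ^ 2) (2 * h₁ u * deriv h₁ u) u := by
        have hh := ((hd1 u).hasDerivAt).pow 2
        exact hh.congr_deriv (by push_cast; ring)
      have hsq2 : HasDerivAt (fun v => h₂ v ^ 2) (2 * h₂ u * deriv h₂ u) u := by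
        have hh := ((hd2 u).hasDerivAt).pow 2
        exact hh.congr_deriv (by push_cast; ring)
      exact hsq1.add hsq2
    have hper1 : ∀ s, h₁ (s - t₀) = h₁ s := by
      intro s; have := hp1 (s - t₀); rw [sub_add_cancel] at this; exact this.symm
    have hper2 : ∀ s, h₂ (s - t₀) = h₂ s := by
      intro s; have := hp2 (s - t₀); rw [sub_add_cancel] at this; exact this.symm
    have hFzero : ∀ s, F s = 0 := by
      intro s
      by_contra hFs
      rcases lt_or_gt_of_ne hFs with hneg | hpos
      · -- F s < 0
        obtain ⟨ε, hεdef⟩ : ∃ ε : ℝ, ε = -F s / (4 * π ^ 2) := ⟨_, rfl⟩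
        have hε : 0 < ε := hεdef ▸ div_pos (by linarith) (by positivity)
        have hFs4 : F s = -(4 * π ^ 2 * ε) := by rw [hεdef]; field_simp
        obtain ⟨G, hGdef⟩ : ∃ G : ℝ → ℝ, G = fun u => (h₁ u ^ 2 + h₂ u ^ 2) + 2 * ε * u := ⟨_, rfl⟩
        have hGder : ∀ u, HasDerivAt G
            (2 * h₁ u * deriv h₁ u + 2 * h₂ u * deriv h₂ u + 2 * ε) u := by
          intro u
          rw [hGdef]
          have hlin : HasDerivAt (fun v : ℝ => 2 * ε * v) (2 * ε) u := by
            simpa using (hasDerivAt_id u).const_mul (2 * ε)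
          exact (hgd u).add hlin
        have hGdiff : Differentiable ℝ G := fun u => (hGder u).differentiableAt
        have hanti : AntitoneOn G (Set.Iic s) := by
          apply antitoneOn_of_deriv_nonpos (convex_Iic s) hGdiff.continuous.continuousOn
            hGdiff.differentiableOn
          intro t ht
          rw [interior_Iic] at ht
          rw [(hGder t).deriv]
          have hFt : F t ≤ F s := hFmono (le_of_lt ht)
          have hpt : 0 < 4 * π ^ 2 * cos (φ t) ^ 2 := by
            have := hcpos t; positivity
          have hpt4 : 4 * π ^ 2 * cos (φ t) ^ 2 ≤ 4 * π ^ 2 := by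
            nlinarith [cos_sq_le_one (φ t), hπ]
          have hS : h₁ t * deriv h₁ t + h₂ t * deriv h₂ t ≤ -ε := by
            nlinarith [hFS t, hFt, hpt, hpt4, hε, hFs4,
              mul_nonneg (sub_nonneg.mpr hpt4) hε.le]
          linarith
        have hle := hanti (Set.mem_Iic.mpr (by linarith : s - t₀ ≤ s))
          (Set.mem_Iic.mpr le_rfl) (by linarith)
        simp only [hGdef] at hle
        rw [hper1 s, hper2 s] at hle
        nlinarith [mul_pos hε ht₀pos]
      · -- F s > 0
        obtain ⟨ε, hεdef⟩ : ∃ ε : ℝ, ε = F s / (4 * π ^ 2) := ⟨_, rfl⟩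
        have hε : 0 < ε := hεdef ▸ div_pos (by linarith) (by positivity)
        have hFs4 : F s = 4 * π ^ 2 * ε := by rw [hεdef]; field_simp
        obtain ⟨G, hGdef⟩ : ∃ G : ℝ → ℝ, G = fun u => (h₁ u ^ 2 + h₂ u ^ 2) - 2 * ε * u := ⟨_, rfl⟩
        have hGder : ∀ u, HasDerivAt G
            (2 * h₁ u * deriv h₁ u + 2 * h₂ u * deriv h₂ u - 2 * ε) u := by
          intro u
          rw [hGdef]
          have hlin : HasDerivAt (fun v : ℝ => 2 * ε * v) (2 * ε) u := by
            simpa using (hasDerivAt_id u).const_mul (2 * ε)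
          exact (hgd u).sub hlin
        have hGdiff : Differentiable ℝ G := fun u => (hGder u).differentiableAt
        have hmono' : MonotoneOn G (Set.Ici s) := by
          apply monotoneOn_of_deriv_nonneg (convex_Ici s) hGdiff.continuous.continuousOn
            hGdiff.differentiableOn
          intro t ht
          rw [interior_Ici] at ht
          rw [(hGder t).deriv]
          have hFt : F s ≤ F t := hFmono (le_of_lt ht)
          have hpt : 0 < 4 * π ^ 2 * cos (φ t) ^ 2 := by
            have := hcpos t; positivity
          have hpt4 : 4 * π ^ 2 * cos (φ t) ^ 2 ≤ 4 * π ^ 2 := by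
            nlinarith [cos_sq_le_one (φ t), hπ]
          have hS : ε ≤ h₁ t * deriv h₁ t + h₂ t * deriv h₂ t := by
            nlinarith [hFS t, hFt, hpt, hpt4, hε, hFs4,
              mul_nonneg (sub_nonneg.mpr hpt4) hε.le]
          linarith
        have hle := hmono' (Set.mem_Ici.mpr le_rfl)
          (Set.mem_Ici.mpr (by linarith : s ≤ s + t₀)) (by linarith)
        simp only [hGdef] at hle
        rw [hp1 s, hp2 s] at hle
        nlinarith [mul_pos hε ht₀pos]
    have hEzero : ∀ t, E t = 0 := by
      intro t
      have hF0 : F = fun _ => (0:ℝ) := funext hFzero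
      have hdF : deriv F t = 0 := by rw [hF0]; simp
      rw [← (hFder t).deriv]
      exact hdF
    obtain ⟨t2, ht2⟩ := not_forall.mp hne
    have hor : h₁ t2 ≠ 0 ∨ h₂ t2 ≠ 0 := by tauto
    have hq' := (otsuki_posdef_core _ _ _ (h₁ t2) (h₂ t2) (hkeyS t2).1 (hkeyS t2).2).2 hor
    have hp0 : 0 ≤ 4 * π ^ 2 * cos (φ t2) ^ 2 * ((deriv h₁ t2)^2 + (deriv h₂ t2)^2) := by positivity
    have hl0 : 0 ≤ -lam * ((h₁ t2)^2 + (h₂ t2)^2) :=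
      mul_nonneg (by linarith) (by positivity)
    have hE2 := hEzero t2
    rw [hEdef] at hE2
    dsimp only at hE2
    linarith
end

section
/- The functions h(t) = cosφ(t)·cos(2θ(t)) and h(t) = cosφ(t)·sin(2θ(t)) each satisfy the scalar Sturm–Liouville equation −(4π²·cos²φ(t)·h'(t))' + (4π²·φ'(t)² − 2 − 8π²·cos²φ(t)·θ'(t)²)·h(t) = 0 for all t ∈ ℝ. -/
open Real Set

lemma aux_sl
    (b : ℝ)
    (φ θ : ℝ → ℝ) (hφs : ContDiff ℝ (⊤ : ℕ∞) φ)
    (hbd : ∀ t, |φ t| < π/2)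
    (hθ' : ∀ t, deriv θ t = cos b ^ 2 / (2 * π * cos (φ t) ^ 4))
    (hφ' : ∀ t, (deriv φ t) ^ 2 = (cos (φ t) ^ 4 - cos b ^ 4) / (4 * π ^ 2 * cos (φ t) ^ 6))
    (hφ'' : ∀ t, deriv (deriv φ) t =
      tan (φ t) * (deriv φ t) ^ 2 - 2 * sin (φ t) * cos (φ t) * (deriv θ t) ^ 2)
    (u v : ℝ → ℝ)
    (hu : ∀ s, HasDerivAt u (-2 * deriv θ s * v s) s)
    (hv : ∀ s, HasDerivAt v (2 * deriv θ s * u s) s)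
    (t : ℝ) :
    -deriv (fun s => 4 * π ^ 2 * cos (φ s) ^ 2
          * deriv (fun r => cos (φ r) * u r) s) t
        + (4 * π ^ 2 * (deriv φ t) ^ 2 - 2 - 8 * π ^ 2 * cos (φ t) ^ 2 * (deriv θ t) ^ 2)
          * (cos (φ t) * u t) = 0 := by
  have hπ : (π : ℝ) ≠ 0 := Real.pi_ne_zero
  have hc : ∀ s, 0 < cos (φ s) := fun s =>
    Real.cos_pos_of_mem_Ioo ⟨by linarith [(abs_lt.1 (hbd s)).1], (abs_lt.1 (hbd s)).2⟩
  have hcne : ∀ s, cos (φ s) ≠ 0 := fun s => (hc s).ne'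
  have hφd : Differentiable ℝ φ := hφs.differentiable (by simp)
  have hdφd : Differentiable ℝ (deriv φ) :=
    ((contDiff_infty_iff_deriv.mp hφs).2).differentiable (by simp)
  have hin : ∀ s, deriv (fun r => cos (φ r) * u r) s
      = -sin (φ s) * deriv φ s * u s + cos (φ s) * (-2 * deriv θ s * v s) := by
    intro s
    exact (((hφd s).hasDerivAt.cos).mul (hu s)).deriv
  have hfun : (fun s => 4 * π ^ 2 * cos (φ s) ^ 2 * deriv (fun r => cos (φ r) * u r) s)
      = fun s => 4 * π ^ 2 * cos (φ s) ^ 2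
          * (-sin (φ s) * deriv φ s * u s + cos (φ s) * (-2 * deriv θ s * v s)) := by
    funext s; rw [hin s]
  -- derivative of deriv θ
  have hQ : HasDerivAt (deriv θ)
      (4 * (sin (φ t) / cos (φ t)) * deriv φ t * deriv θ t) t := by
    have hθeq : deriv θ = fun s => cos b ^ 2 / (2 * π * cos (φ s) ^ 4) := funext hθ'
    rw [hθeq]
    have hden : HasDerivAt (fun s => 2 * π * cos (φ s) ^ 4)
        (2 * π * ((4 : ℕ) * cos (φ t) ^ (4 - 1) * (-sin (φ t) * deriv φ t))) t :=
      (((hφd t).hasDerivAt.cos).pow 4).const_mul (2 * π)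
    have hdne : 2 * π * cos (φ t) ^ 4 ≠ 0 := by have := hc t; positivity
    have : HasDerivAt (fun s => cos b ^ 2 / (2 * π * cos (φ s) ^ 4)) _ t :=
      (hasDerivAt_const t (cos b ^ 2)).div hden hdne
    convert this using 1
    field_simp [hπ, hcne t]
    ring
  -- derivative of the full function
  have hcos : HasDerivAt (fun s => cos (φ s)) (-sin (φ t) * deriv φ t) t :=
    (hφd t).hasDerivAt.cos
  have hc2 : HasDerivAt (fun s => 4 * π ^ 2 * cos (φ s) ^ 2)
      (4 * π ^ 2 * ((2 : ℕ) * cos (φ t) ^ (2 - 1) * (-sin (φ t) * deriv φ t))) t :=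
    (hcos.pow 2).const_mul (4 * π ^ 2)
  have hsin : HasDerivAt (fun s => -sin (φ s)) (-(cos (φ t) * deriv φ t)) t :=
    ((hφd t).hasDerivAt.sin).neg
  have term1 := (hsin.mul (hdφd t).hasDerivAt).mul (hu t)
  have term2 := hcos.mul ((hQ.const_mul (-2)).mul (hv t))
  have big := hc2.mul (term1.add term2)
  have hbig : (fun s => 4 * π ^ 2 * cos (φ s) ^ 2
          * (-sin (φ s) * deriv φ s * u s + cos (φ s) * (-2 * deriv θ s * v s)))
      = (fun s => (4 * π ^ 2 * cos (φ s) ^ 2)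
          * ((fun s => -sin (φ s) * deriv φ s * u s) s
             + (fun s => cos (φ s) * (-2 * deriv θ s * v s)) s)) := rfl
  rw [hfun]
  rw [show (fun s => 4 * π ^ 2 * cos (φ s) ^ 2
          * (-sin (φ s) * deriv φ s * u s + cos (φ s) * (-2 * deriv θ s * v s)))
      = (fun s => (4 * π ^ 2 * cos (φ s) ^ 2)
          * (((fun s => -sin (φ s)) s * deriv φ s * u s)
             + ((fun s => cos (φ s)) s * ((-2 * deriv θ s) * v s)))) from rfl]
  have big' : HasDerivAt (fun s => (4 * π ^ 2 * cos (φ s) ^ 2)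
          * (((fun s => -sin (φ s)) s * deriv φ s * u s)
             + ((fun s => cos (φ s)) s * ((-2 * deriv θ s) * v s)))) _ t := big
  rw [big'.deriv]
  have hPP := hφ'' t
  rw [Real.tan_eq_sin_div_cos] at hPP
  rw [hPP]
  have hs2 : sin (φ t) ^ 2 = 1 - cos (φ t) ^ 2 := by
    nlinarith [Real.sin_sq_add_cos_sq (φ t)]
  have hkey : 4 * π ^ 2 * cos (φ t) ^ 2 * (deriv φ t) ^ 2
      + 4 * π ^ 2 * cos (φ t) ^ 4 * (deriv θ t) ^ 2 = 1 := by
    rw [hφ' t, hθ' t]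
    field_simp [hπ, hcne t]
    ring
  simp only [Pi.mul_apply, Pi.add_apply]
  field_simp [hπ, hcne t]
  linear_combination (2 * cos (φ t) * u t) * hkey +
    (-(4 * π ^ 2 * cos (φ t) * (deriv φ t) ^ 2 * u t)
      - 8 * π ^ 2 * cos (φ t) ^ 3 * (deriv θ t) ^ 2 * u t) * hs2

/-- The functions `cosφ·cos2θ` and `cosφ·sin2θ` solve the `l = 0` first-component
scalar Sturm–Liouville equation with eigenvalue `0`. -/
theorem l0_first_component_solutions
    (b : ℝ) (hb : b ∈ Set.Ioo (-(π/2)) 0)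
    (φ θ : ℝ → ℝ) (hφs : ContDiff ℝ (⊤ : ℕ∞) φ) (hθs : ContDiff ℝ (⊤ : ℕ∞) θ)
    (hφ0 : φ 0 = b) (hdφ0 : deriv φ 0 = 0) (hθ0 : θ 0 = 0)
    (hbd : ∀ t, |φ t| < π/2)
    (hθ' : ∀ t, deriv θ t = cos b ^ 2 / (2 * π * cos (φ t) ^ 4))
    (hφ' : ∀ t, (deriv φ t) ^ 2 = (cos (φ t) ^ 4 - cos b ^ 4) / (4 * π ^ 2 * cos (φ t) ^ 6))
    (hφ'' : ∀ t, deriv (deriv φ) t =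
      tan (φ t) * (deriv φ t) ^ 2 - 2 * sin (φ t) * cos (φ t) * (deriv θ t) ^ 2) :
    (∀ t, -deriv (fun s => 4 * π ^ 2 * cos (φ s) ^ 2
          * deriv (fun r => cos (φ r) * cos (2 * θ r)) s) t
        + (4 * π ^ 2 * (deriv φ t) ^ 2 - 2 - 8 * π ^ 2 * cos (φ t) ^ 2 * (deriv θ t) ^ 2)
          * (cos (φ t) * cos (2 * θ t)) = 0) ∧
    (∀ t, -deriv (fun s => 4 * π ^ 2 * cos (φ s) ^ 2
          * deriv (fun r => cos (φ r) * sin (2 * θ r)) s) t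
        + (4 * π ^ 2 * (deriv φ t) ^ 2 - 2 - 8 * π ^ 2 * cos (φ t) ^ 2 * (deriv θ t) ^ 2)
          * (cos (φ t) * sin (2 * θ t)) = 0) := by
  have hθd : Differentiable ℝ θ := hθs.differentiable (by simp)
  have h2θ : ∀ s : ℝ, HasDerivAt (fun r => 2 * θ r) (2 * deriv θ s) s :=
    fun s => (hθd s).hasDerivAt.const_mul 2
  have hcosd : ∀ s : ℝ, HasDerivAt (fun r => cos (2 * θ r))
      (-2 * deriv θ s * sin (2 * θ s)) s := by
    intro s
    have := (h2θ s).cos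
    convert this using 1; ring
  have hsind : ∀ s : ℝ, HasDerivAt (fun r => sin (2 * θ r))
      (2 * deriv θ s * cos (2 * θ s)) s := by
    intro s
    have := (h2θ s).sin
    convert this using 1; ring
  constructor
  · intro t
    exact aux_sl b φ θ hφs hbd hθ' hφ' hφ'' _ _ hcosd hsind t
  · intro t
    refine aux_sl b φ θ hφs hbd hθ' hφ' hφ'' _ (fun r => -cos (2 * θ r)) ?_ ?_ t
    · intro s
      have := hsind s
      convert this using 1; ring
    · intro s
      have := (hcosd s).neg
      exact this.congr_deriv (by ring)
end

section
/- The function h(t) = 2π·cos²φ(t)·φ'(t) satisfies the scalar Sturm–Liouville equation −(4π²·cos²φ(t)·h'(t))' + (4π²·φ'(t)² − 2 − 8π²·sin²φ(t)·cos²φ(t)·θ'(t)²)·h(t) = 0 for all t ∈ ℝ, and moreover h(t+T) = −h(t) for all t ∈ ℝ (h is T-antiperiodic). -/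
open Real Set

private lemma ode_unique_global {F : Type*} [NormedAddCommGroup F] [NormedSpace ℝ F]
    {v : F → F} {K : NNReal} {u : Set F} (hv : LipschitzOnWith K v u)
    {f g : ℝ → F} (hf : ∀ t, HasDerivAt f (v (f t)) t) (hfs : ∀ t, f t ∈ u)
    (hg : ∀ t, HasDerivAt g (v (g t)) t) (hgs : ∀ t, g t ∈ u)
    (heq : f 0 = g 0) : ∀ t, f t = g t := by
  intro t
  have h1 : (0:ℝ) < |t| + 1 := by positivity
  refine ODE_solution_unique_of_mem_Icc (v := fun _ => v) (s := fun _ => u) (K := K)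
    (fun _ _ => hv) (t₀ := 0) (a := -(|t|+1)) (b := |t|+1)
    ⟨by linarith, h1⟩
    (fun x _ => (hf x).continuousAt.continuousWithinAt)
    (fun x _ => hf x) (fun x _ => hfs x)
    (fun x _ => (hg x).continuousAt.continuousWithinAt)
    (fun x _ => hg x) (fun x _ => hgs x) heq
    ⟨by linarith [neg_abs_le t], by linarith [le_abs_self t]⟩


/-- The function `2π·cos²φ·φ'` solves the `l = 0` second-component scalar
Sturm–Liouville equation with eigenvalue `0`, and is `T`-antiperiodic. -/
theorem l0_second_component_solution
    (b : ℝ) (hb : b ∈ Set.Ioo (-(π/2)) 0)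
    (φ θ : ℝ → ℝ) (hφs : ContDiff ℝ (⊤ : ℕ∞) φ) (hθs : ContDiff ℝ (⊤ : ℕ∞) θ)
    (hφ0 : φ 0 = b) (hdφ0 : deriv φ 0 = 0) (hθ0 : θ 0 = 0)
    (hbd : ∀ t, |φ t| < π/2)
    (hθ' : ∀ t, deriv θ t = cos b ^ 2 / (2 * π * cos (φ t) ^ 4))
    (hφ' : ∀ t, (deriv φ t) ^ 2 = (cos (φ t) ^ 4 - cos b ^ 4) / (4 * π ^ 2 * cos (φ t) ^ 6))
    (hφ'' : ∀ t, deriv (deriv φ) t =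
      tan (φ t) * (deriv φ t) ^ 2 - 2 * sin (φ t) * cos (φ t) * (deriv θ t) ^ 2)
    (T : ℝ) (hT : 0 < T) (hφT : φ T = -b)
    (hmono : ∀ t ∈ Set.Ioo (0:ℝ) T, 0 < deriv φ t)
    (h : ℝ → ℝ) (hh : ∀ t, h t = 2 * π * cos (φ t) ^ 2 * deriv φ t) :
    (∀ t, -deriv (fun s => 4 * π ^ 2 * cos (φ s) ^ 2 * deriv h s) t
        + (4 * π ^ 2 * (deriv φ t) ^ 2 - 2
            - 8 * π ^ 2 * sin (φ t) ^ 2 * cos (φ t) ^ 2 * (deriv θ t) ^ 2) * h t = 0) ∧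
    (∀ t, h (t + T) = -h t) := by
  have hπ : (0:ℝ) < π := pi_pos
  have hπ0 : π ≠ 0 := hπ.ne'
  have hcφ : ∀ t, 0 < cos (φ t) := fun t => cos_pos_of_mem_Ioo (abs_lt.mp (hbd t))
  have hφd : Differentiable ℝ φ := hφs.differentiable (by simp)
  have hφ'c : ContDiff ℝ (⊤:ℕ∞) (deriv φ) := (contDiff_infty_iff_deriv.mp hφs).2
  have hφ'd : Differentiable ℝ (deriv φ) := hφ'c.differentiable (by simp)
  have hderφ : ∀ t, HasDerivAt φ (deriv φ t) t := fun t => (hφd t).hasDerivAt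
  have hder2 : ∀ t, HasDerivAt (deriv φ) (deriv (deriv φ) t) t := fun t => (hφ'd t).hasDerivAt
  constructor
  ·
      have hhfun : h = fun t => 2 * π * (cos (φ t) ^ 2 * deriv φ t) :=
        funext fun t => by rw [hh t]; ring
      have hkey : ∀ t, deriv φ t ^ 2 * (4 * π ^ 2 * cos (φ t) ^ 6) = cos (φ t)^4 - cos b^4 := by
        intro t
        rw [hφ' t]
        exact div_mul_cancel₀ _ (by have := hcφ t; positivity)
      have hEd : ∀ t, deriv h t = -(sin (φ t) * (cos (φ t)^4 + cos b^4)) / (2*π*cos (φ t)^5) := by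
        intro t
        have hc : HasDerivAt (fun s => cos (φ s)) (-sin (φ t) * deriv φ t) t := (hderφ t).cos
        have h1 : HasDerivAt (fun s => 2*π*(cos (φ s)^2 * deriv φ s))
            (2*π*(((2:ℕ) * cos (φ t) ^ (2-1) * (-sin (φ t) * deriv φ t)) * deriv φ t
              + cos (φ t)^2 * deriv (deriv φ) t)) t := ((hc.pow 2).mul (hder2 t)).const_mul (2*π)
        rw [hhfun, h1.deriv, hφ'' t, hθ' t, tan_eq_sin_div_cos]
        have hc0 : cos (φ t) ≠ 0 := (hcφ t).ne'
        have hy2 := hkey t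
        field_simp
        linear_combination (-sin (φ t)) * hy2
      intro t
      have hc0 : cos (φ t) ≠ 0 := (hcφ t).ne'
      have hPfun : (fun s => 4 * π ^ 2 * cos (φ s) ^ 2 * deriv h s)
          = fun s => -(2*π) * (sin (φ s) * (cos (φ s)^4 + cos b^4) / cos (φ s)^3) := by
        funext s
        rw [hEd s]
        have hc0s : cos (φ s) ≠ 0 := (hcφ s).ne'
        field_simp
        ring
      have hc : HasDerivAt (fun s => cos (φ s)) (-sin (φ t) * deriv φ t) t := (hderφ t).cos
      have hNum : HasDerivAt (fun s => sin (φ s) * (cos (φ s)^4 + cos b^4))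
          (cos (φ t) * deriv φ t * (cos (φ t)^4 + cos b^4)
            + sin (φ t) * ((4:ℕ) * cos (φ t) ^ (4-1) * (-sin (φ t) * deriv φ t))) t := by
        have h4 : HasDerivAt (fun s => cos (φ s)^4 + cos b^4)
            ((4:ℕ) * cos (φ t) ^ (4-1) * (-sin (φ t) * deriv φ t)) t := (hc.pow 4).add_const _
        exact (hderφ t).sin.mul h4
      have hDen : HasDerivAt (fun s => cos (φ s)^3)
          ((3:ℕ) * cos (φ t) ^ (3-1) * (-sin (φ t) * deriv φ t)) t := hc.pow 3
      have hQ : HasDerivAt (fun s => -(2*π) * (sin (φ s) * (cos (φ s)^4 + cos b^4) / cos (φ s)^3))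
          (-(2*π) * (((cos (φ t) * deriv φ t * (cos (φ t)^4 + cos b^4)
            + sin (φ t) * ((4:ℕ) * cos (φ t) ^ (4-1) * (-sin (φ t) * deriv φ t))) * cos (φ t)^3
            - sin (φ t) * (cos (φ t)^4 + cos b^4) * ((3:ℕ) * cos (φ t) ^ (3-1) * (-sin (φ t) * deriv φ t)))
            / (cos (φ t)^3)^2)) t :=
        (hNum.div hDen (pow_ne_zero 3 hc0)).const_mul _
      rw [hPfun, hQ.deriv, hh t, hθ' t]
      have hy2 := hkey t
      have hsc := sin_sq_add_cos_sq (φ t)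
      field_simp
      push_cast
      linear_combination (4*π*deriv φ t*cos (φ t)^2)*hy2
        + (π*deriv φ t*(4*cos b^4*cos (φ t)^2 - 4*cos (φ t)^6))*hsc

  ·
      have hcb : 0 < cos b :=
        cos_pos_of_mem_Ioo ⟨hb.1, lt_trans hb.2 (by positivity)⟩
      -- bound |φ t| ≤ -b, cos b ≤ cos (φ t)
      have hcbφ : ∀ t, cos b ≤ cos (φ t) := by
        intro t
        have h1 := hφ' t
        have h2 : (0:ℝ) ≤ (cos (φ t) ^ 4 - cos b ^ 4) / (4 * π ^ 2 * cos (φ t) ^ 6) := by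
          rw [← h1]; positivity
        have h3 : (0:ℝ) < 4 * π ^ 2 * cos (φ t) ^ 6 := by have := hcφ t; positivity
        have h4 : (0:ℝ) ≤ cos (φ t) ^ 4 - cos b ^ 4 := by
          by_contra hc
          push_neg at hc
          nlinarith [div_neg_of_neg_of_pos hc h3]
        exact (pow_le_pow_iff_left₀ (n := 4) hcb.le (hcφ t).le (by norm_num)).mp (by linarith)
      have hφbd : ∀ t, |φ t| ≤ -b := by
        intro t
        by_contra hc
        push_neg at hc
        have h0b : (0:ℝ) ≤ -b := by linarith [hb.2]
        have habs : |φ t| ≤ π := by linarith [(hbd t), pi_pos]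
        have := cos_lt_cos_of_nonneg_of_le_pi h0b habs hc
        rw [cos_abs, cos_neg] at this
        linarith [hcbφ t]
      set M : ℝ := 1 / (2 * π * cos b ^ 3) with hM
      have hM0 : 0 < M := by positivity
      have hdφbd : ∀ t, |deriv φ t| ≤ M := by
        intro t
        have hc6 : cos b ^ 6 ≤ cos (φ t) ^ 6 := pow_le_pow_left₀ hcb.le (hcbφ t) 6
        have hM2 : M^2 = 1/(4*π^2*cos b^6) := by rw [hM]; field_simp; ring
        have h2 : (deriv φ t)^2 ≤ M^2 := by
          rw [hφ' t, hM2]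
          apply div_le_div₀ (by norm_num)
          · have := pow_le_one₀ (hcφ t).le (cos_le_one (φ t)) (n := 4)
            nlinarith [pow_pos hcb 4]
          · positivity
          · nlinarith [sq_nonneg π, mul_le_mul_of_nonneg_left hc6 (sq_nonneg π)]
        exact (pow_le_pow_iff_left₀ (abs_nonneg _) hM0.le two_ne_zero).mp (by rwa [sq_abs])
      -- the vector field
      set v : ℝ × ℝ → ℝ × ℝ := fun p =>
        (p.2, sin p.1 / cos p.1 * p.2^2 - 2*sin p.1*cos p.1*(cos b^2/(2*π*cos p.1^4))^2) with hv
      set u : Set (ℝ × ℝ) := Icc b (-b) ×ˢ Icc (-M) M with hu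
      have huc : IsCompact u := isCompact_Icc.prod isCompact_Icc
      have huconv : Convex ℝ u := (convex_Icc _ _).prod (convex_Icc _ _)
      set U : Set (ℝ × ℝ) := {p : ℝ × ℝ | cos p.1 ≠ 0} with hUdef
      have hUopen : IsOpen U :=
        isOpen_compl_singleton.preimage (Real.continuous_cos.comp continuous_fst)
      have hsubU : u ⊆ U := by
        rintro ⟨x, y⟩ ⟨hx, -⟩
        have hx1 : -(π/2) < x := lt_of_lt_of_le hb.1 hx.1
        have hx2 : x < π/2 := lt_of_le_of_lt hx.2 (by linarith [hb.1])
        exact (cos_pos_of_mem_Ioo ⟨hx1, hx2⟩).ne'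
      have hvC : ContDiffOn ℝ 1 v U := by
        apply ContDiffOn.prodMk
        · exact contDiff_snd.contDiffOn
        · apply ContDiffOn.sub
          · exact ((Real.contDiff_sin.comp contDiff_fst).contDiffOn.div
              (Real.contDiff_cos.comp contDiff_fst).contDiffOn (fun p hp => hp)).mul
              (contDiff_snd.pow 2).contDiffOn
          · apply ContDiffOn.mul
            · exact ((contDiff_const.mul (Real.contDiff_sin.comp contDiff_fst)).mul
                (Real.contDiff_cos.comp contDiff_fst)).contDiffOn
            · apply ContDiffOn.pow
              refine ContDiffOn.div contDiff_const.contDiffOn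
                (contDiff_const.mul ((Real.contDiff_cos.comp contDiff_fst).pow 4)).contDiffOn ?_
              intro p hp
              have hp' : cos p.1 ≠ 0 := hp
              positivity
      obtain ⟨C, hC⟩ := huc.exists_bound_of_continuousOn
        ((hvC.continuousOn_fderiv_of_isOpen hUopen le_rfl).mono hsubU)
      set K : NNReal := ⟨max C 0, le_max_right _ _⟩ with hK
      have hlip : LipschitzOnWith K v u := by
        refine Convex.lipschitzOnWith_of_nnnorm_fderiv_le
          (fun x hx => (hvC.contDiffAt (hUopen.mem_nhds (hsubU hx))).differentiableAt one_ne_zero)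
          (fun x hx => ?_) huconv
        rw [← NNReal.coe_le_coe, coe_nnnorm]
        exact (hC x hx).trans (le_max_left _ _)
      -- solution curves
      have hsecond : ∀ s, deriv (deriv φ) s
          = sin (φ s) / cos (φ s) * (deriv φ s)^2
            - 2*sin (φ s)*cos (φ s)*(cos b^2/(2*π*cos (φ s)^4))^2 := by
        intro s
        rw [hφ'' s, hθ' s, tan_eq_sin_div_cos]
      have hsolf : ∀ t, HasDerivAt (fun t => (φ t, deriv φ t)) (v (φ t, deriv φ t)) t := by
        intro t
        refine HasDerivAt.prodMk (hderφ t) ?_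
        have := hder2 t
        rw [hsecond t] at this
        exact this
      have hfmem : ∀ t, (φ t, deriv φ t) ∈ u := by
        intro t
        obtain ⟨h1, h2⟩ := abs_le.mp (hφbd t)
        obtain ⟨h3, h4⟩ := abs_le.mp (hdφbd t)
        exact ⟨⟨by linarith, h2⟩, ⟨h3, h4⟩⟩
      -- even symmetry curve
      have hsolg1 : ∀ t, HasDerivAt (fun t => (φ (-t), -deriv φ (-t)))
          (v (φ (-t), -deriv φ (-t))) t := by
        intro t
        have e1 : HasDerivAt (fun t : ℝ => φ (-t)) (-deriv φ (-t)) t := by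
          simpa [Function.comp_def] using (hderφ (-t)).comp t (hasDerivAt_neg t)
        have e2 : HasDerivAt (fun t : ℝ => -deriv φ (-t)) (deriv (deriv φ) (-t)) t := by
          simpa [Function.comp_def, Pi.neg_def] using ((hder2 (-t)).comp t (hasDerivAt_neg t)).neg
        convert e1.prodMk e2 using 1
        simp only [hv]
        refine Prod.ext rfl ?_
        simp only
        rw [hsecond (-t)]
        ring
      have hg1mem : ∀ t, (φ (-t), -deriv φ (-t)) ∈ u := by
        intro t
        obtain ⟨h1, h2⟩ := abs_le.mp (hφbd (-t))
        obtain ⟨h3, h4⟩ := abs_le.mp (hdφbd (-t))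
        exact ⟨⟨by linarith, h2⟩, ⟨show -M ≤ -deriv φ (-t) by linarith, show -deriv φ (-t) ≤ M by linarith⟩⟩
      -- reflection symmetry curve
      have hsolg2 : ∀ t, HasDerivAt (fun t => (-φ (T - t), deriv φ (T - t)))
          (v (-φ (T - t), deriv φ (T - t))) t := by
        intro t
        have hTt : HasDerivAt (fun x : ℝ => T - x) (-1) t := (hasDerivAt_id t).const_sub T
        have e1 : HasDerivAt (fun t : ℝ => -φ (T - t)) (deriv φ (T - t)) t := by
          simpa [Function.comp_def, Pi.neg_def] using ((hderφ (T - t)).comp t hTt).neg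
        have e2 : HasDerivAt (fun t : ℝ => deriv φ (T - t)) (-deriv (deriv φ) (T - t)) t := by
          simpa [Function.comp_def] using (hder2 (T - t)).comp t hTt
        convert e1.prodMk e2 using 1
        simp only [hv]
        refine Prod.ext rfl ?_
        simp only
        rw [hsecond (T - t), sin_neg, cos_neg]
        ring
      have hg2mem : ∀ t, (-φ (T - t), deriv φ (T - t)) ∈ u := by
        intro t
        obtain ⟨h1, h2⟩ := abs_le.mp (hφbd (T - t))
        obtain ⟨h3, h4⟩ := abs_le.mp (hdφbd (T - t))
        exact ⟨⟨show b ≤ -φ (T - t) by linarith, show -φ (T - t) ≤ -b by linarith⟩, ⟨h3, h4⟩⟩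
      -- deriv φ T = 0
      have hdφT : deriv φ T = 0 := by
        have := hφ' T
        rw [hφT, cos_neg, sub_self, zero_div] at this
        exact pow_eq_zero_iff (n := 2) (by norm_num) |>.mp this
      -- apply uniqueness
      have heven := ode_unique_global hlip hsolf hfmem hsolg1 hg1mem
        (by rw [neg_zero, hdφ0, neg_zero])
      have href := ode_unique_global hlip hsolf hfmem hsolg2 hg2mem
        (by rw [sub_zero, hφ0, hφT, hdφ0, hdφT, neg_neg])
      have hφe : ∀ t, φ t = φ (-t) := fun t => congrArg Prod.fst (heven t)
      have hdφe : ∀ t, deriv φ t = -deriv φ (-t) := fun t => congrArg Prod.snd (heven t)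
      have hφr : ∀ t, φ t = -φ (T - t) := fun t => congrArg Prod.fst (href t)
      have hdφr : ∀ t, deriv φ t = deriv φ (T - t) := fun t => congrArg Prod.snd (href t)
      intro t
      have e1 : φ (t + T) = -φ t := by
        have := hφr (t + T)
        rw [show T - (t + T) = -t by ring, ← hφe t] at this
        linarith
      have e2 : deriv φ (t + T) = -deriv φ t := by
        have := hdφr (t + T)
        rw [show T - (t + T) = -t by ring] at this
        rw [this, eq_neg_iff_add_eq_zero]
        have := hdφe t
        linarith
      rw [hh, hh, e1, e2, cos_neg]
      ring
end

section
/- Define ζ(t) = 2π·cos³φ(t)·φ'(t). Then for all t ∈ ℝ: ζ'(t) = −sinφ(t)/π and ζ''(t) = −ζ(t)/(2π²·cos²φ(t)); that is, ζ solves the equation z'' + (λ+2)·z/p(t) = 0 with λ = 0 and p(t) = 4π²·cos²φ(t). -/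
open Real Set

/-- For `ζ = 2π·cos³φ·φ'` one has `ζ' = −sinφ/π` and `ζ'' = −ζ/(2π²cos²φ)`,
i.e. `ζ` solves the normal-form equation `z'' + (λ+2)z/p = 0` with `λ = 0`
and `p = 4π²cos²φ`. -/
theorem zeta_derivatives
    (b : ℝ) (hb : b ∈ Set.Ioo (-(π/2)) 0)
    (φ θ : ℝ → ℝ) (hφs : ContDiff ℝ (⊤ : ℕ∞) φ) (hθs : ContDiff ℝ (⊤ : ℕ∞) θ)
    (hφ0 : φ 0 = b) (hdφ0 : deriv φ 0 = 0) (hθ0 : θ 0 = 0)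
    (hbd : ∀ t, |φ t| < π/2)
    (hθ' : ∀ t, deriv θ t = cos b ^ 2 / (2 * π * cos (φ t) ^ 4))
    (hφ' : ∀ t, (deriv φ t) ^ 2 = (cos (φ t) ^ 4 - cos b ^ 4) / (4 * π ^ 2 * cos (φ t) ^ 6))
    (hφ'' : ∀ t, deriv (deriv φ) t =
      tan (φ t) * (deriv φ t) ^ 2 - 2 * sin (φ t) * cos (φ t) * (deriv θ t) ^ 2)
    (ζ : ℝ → ℝ) (hζ : ∀ t, ζ t = 2 * π * cos (φ t) ^ 3 * deriv φ t) :
    (∀ t, deriv ζ t = -sin (φ t) / π) ∧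
    (∀ t, deriv (deriv ζ) t = -ζ t / (2 * π ^ 2 * cos (φ t) ^ 2)) := by
  have hφd : Differentiable ℝ φ := hφs.differentiable (by simp)
  have hdφd : Differentiable ℝ (deriv φ) :=
    ((contDiff_infty_iff_deriv.mp hφs).2).differentiable (by simp)
  have hπ : (π : ℝ) ≠ 0 := Real.pi_ne_zero
  have hc : ∀ t, cos (φ t) ≠ 0 := by
    intro t
    have h := hbd t
    have := Real.cos_pos_of_mem_Ioo (Set.mem_Ioo.mpr (abs_lt.mp h))
    exact ne_of_gt this
  have hderζ : ∀ t, HasDerivAt ζ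
      (2 * π * ((3 * cos (φ t) ^ 2 * (-sin (φ t) * deriv φ t)) * deriv φ t
        + cos (φ t) ^ 3 * deriv (deriv φ) t)) t := by
    intro t
    have h1 : HasDerivAt φ (deriv φ t) t := (hφd t).hasDerivAt
    have h2 : HasDerivAt (fun u => cos (φ u)) (-sin (φ t) * deriv φ t) t :=
      (Real.hasDerivAt_cos (φ t)).comp t h1
    have h3 : HasDerivAt (fun u => cos (φ u) ^ 3)
        (3 * cos (φ t) ^ 2 * (-sin (φ t) * deriv φ t)) t := by
      have h := h2.pow 3
      norm_num at h
      exact h.congr_deriv (by ring)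
      try ring
    have h4 : HasDerivAt (deriv φ) (deriv (deriv φ) t) t := (hdφd t).hasDerivAt
    have h5 := (h3.mul h4).const_mul (2 * π)
    have heq : ζ = fun u => 2 * π * (cos (φ u) ^ 3 * deriv φ u) := by
      funext u; rw [hζ u]; ring
    rw [heq]
    exact h5
    try ring
  have key : ∀ t, deriv ζ t = -sin (φ t) / π := by
    intro t
    rw [(hderζ t).deriv, hφ'' t, hθ' t, Real.tan_eq_sin_div_cos]
    have hA := hφ' t
    rw [show (3 * cos (φ t) ^ 2 * (-sin (φ t) * deriv φ t)) * deriv φ t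
        = 3 * cos (φ t) ^ 2 * (-sin (φ t)) * (deriv φ t) ^ 2 by ring, hA]
    have hct := hc t
    field_simp
    ring
  refine ⟨key, fun t => ?_⟩
  have hζ'fun : deriv ζ = fun u => -sin (φ u) / π := funext key
  rw [hζ'fun]
  have h1 : HasDerivAt φ (deriv φ t) t := (hφd t).hasDerivAt
  have h2 : HasDerivAt (fun u => -sin (φ u) / π)
      (-(cos (φ t) * deriv φ t) / π) t := by
    have := ((Real.hasDerivAt_sin (φ t)).comp t h1).neg.div_const π
    exact this
    try ring
  rw [h2.deriv, hζ t]
  have hct := hc t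
  field_simp
  try ring
end

section
/- Define ζ(t) = 2π·cos³φ(t)·φ'(t). Then ∫₀^T ζ'(t)² dt = 2·∫₀^T ζ(t)²/(4π²·cos²φ(t)) dt. -/
open Real Set intervalIntegral

/-- For `ζ = 2π·cos³φ·φ'` one has `∫₀ᵀ ζ'² dt = 2·∫₀ᵀ ζ²/(4π²cos²φ) dt`,
i.e. the Rayleigh quotient of `ζ` for the normal-form equation equals `2`. -/
theorem zeta_rayleigh_quotient
    (b : ℝ) (hb : b ∈ Set.Ioo (-(π/2)) 0)
    (φ θ : ℝ → ℝ) (hφs : ContDiff ℝ (⊤ : ℕ∞) φ) (hθs : ContDiff ℝ (⊤ : ℕ∞) θ)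
    (hφ0 : φ 0 = b) (hdφ0 : deriv φ 0 = 0) (hθ0 : θ 0 = 0)
    (hbd : ∀ t, |φ t| < π/2)
    (hθ' : ∀ t, deriv θ t = cos b ^ 2 / (2 * π * cos (φ t) ^ 4))
    (hφ' : ∀ t, (deriv φ t) ^ 2 = (cos (φ t) ^ 4 - cos b ^ 4) / (4 * π ^ 2 * cos (φ t) ^ 6))
    (hφ'' : ∀ t, deriv (deriv φ) t =
      tan (φ t) * (deriv φ t) ^ 2 - 2 * sin (φ t) * cos (φ t) * (deriv θ t) ^ 2)
    (T : ℝ) (hT : 0 < T) (hφT : φ T = -b)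
    (hmono : ∀ t ∈ Set.Ioo (0:ℝ) T, 0 < deriv φ t)
    (ζ : ℝ → ℝ) (hζ : ∀ t, ζ t = 2 * π * cos (φ t) ^ 3 * deriv φ t) :
    (∫ t in (0:ℝ)..T, (deriv ζ t) ^ 2)
      = 2 * ∫ t in (0:ℝ)..T, (ζ t) ^ 2 / (4 * π ^ 2 * cos (φ t) ^ 2) := by
  have hπ : (π:ℝ) ≠ 0 := Real.pi_ne_zero
  have hcos : ∀ t, 0 < cos (φ t) := by
    intro t
    have h := abs_lt.mp (hbd t)
    exact Real.cos_pos_of_mem_Ioo ⟨h.1, h.2⟩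
  have hcne : ∀ t, cos (φ t) ≠ 0 := fun t => (hcos t).ne'
  have hφd : Differentiable ℝ φ := hφs.differentiable (by simp)
  have hφd' : Differentiable ℝ (deriv φ) :=
    ((contDiff_infty_iff_deriv.mp hφs).2).differentiable (by simp)
  have hζf : ζ = fun t => 2 * π * cos (φ t) ^ 3 * deriv φ t := funext hζ
  subst hζf
  have key : ∀ t, HasDerivAt (fun s => 2 * π * cos (φ s) ^ 3 * deriv φ s)
      (-sin (φ t) / π) t := by
    intro t
    have h1 : HasDerivAt φ (deriv φ t) t := (hφd t).hasDerivAt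
    have h2 : HasDerivAt (deriv φ) (deriv (deriv φ) t) t := (hφd' t).hasDerivAt
    have h3 : HasDerivAt (fun s => cos (φ s)) (-sin (φ t) * deriv φ t) t :=
      (Real.hasDerivAt_cos (φ t)).comp t h1
    have h4 : HasDerivAt (fun s => cos (φ s) ^ 3)
        (3 * cos (φ t) ^ 2 * (-sin (φ t) * deriv φ t)) t := by
      simpa using h3.fun_pow 3
    have h5 := (h4.const_mul (2 * π)).fun_mul h2
    refine h5.congr_deriv ?_
    rw [hφ'' t, hθ' t, Real.tan_eq_sin_div_cos]
    have hd2 := hφ' t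
    have hc := hcne t
    field_simp at hd2 ⊢
    linear_combination (-sin (φ t)) * hd2
  have hderiv : ∀ t, deriv (fun s => 2 * π * cos (φ s) ^ 3 * deriv φ s) t
      = -sin (φ t) / π := fun t => (key t).deriv
  have hcφ : Continuous φ := hφs.continuous
  have hcφ' : Continuous (deriv φ) := (contDiff_infty_iff_deriv.mp hφs).2.continuous
  have hdT : deriv φ T = 0 := by
    have h := hφ' T
    rw [hφT, Real.cos_neg, sub_self, zero_div] at h
    exact pow_eq_zero_iff two_ne_zero |>.mp h
  have hsin : ∀ t, HasDerivAt (fun s => -sin (φ s) / π) (-cos (φ t) * deriv φ t / π) t := by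
    intro t
    have h1 : HasDerivAt φ (deriv φ t) t := (hφd t).hasDerivAt
    have h2 := ((Real.hasDerivAt_sin (φ t)).comp t h1).fun_neg.div_const π
    refine h2.congr_deriv ?_
    ring
  have hF : ∀ t, HasDerivAt
      (fun s => (2 * π * cos (φ s) ^ 3 * deriv φ s) * (-sin (φ s) / π))
      ((deriv (fun s => 2 * π * cos (φ s) ^ 3 * deriv φ s) t) ^ 2
        - 2 * ((2 * π * cos (φ t) ^ 3 * deriv φ t) ^ 2 / (4 * π ^ 2 * cos (φ t) ^ 2))) t := by
    intro t
    have h := (key t).fun_mul (hsin t)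
    refine h.congr_deriv ?_
    rw [hderiv t]
    have hc := hcne t
    field_simp
    ring
  have c2 : Continuous fun t => 2 * ((2 * π * cos (φ t) ^ 3 * deriv φ t) ^ 2
      / (4 * π ^ 2 * cos (φ t) ^ 2)) := by
    apply Continuous.mul continuous_const
    apply Continuous.div (by fun_prop) (by fun_prop)
    intro t
    have := hcne t
    positivity
  have c1 : Continuous fun t => (deriv (fun s => 2 * π * cos (φ s) ^ 3 * deriv φ s) t) ^ 2 := by
    have h1 : (fun t => (deriv (fun s => 2 * π * cos (φ s) ^ 3 * deriv φ s) t) ^ 2)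
        = fun t => (-sin (φ t) / π) ^ 2 := by
      funext t; rw [hderiv t]
    rw [h1]; fun_prop
  have hFTC := intervalIntegral.integral_eq_sub_of_hasDerivAt (f := fun s =>
      (2 * π * cos (φ s) ^ 3 * deriv φ s) * (-sin (φ s) / π))
    (fun t _ => hF t) (((c1.sub c2).intervalIntegrable 0 T))
  rw [intervalIntegral.integral_sub (c1.intervalIntegrable 0 T) (c2.intervalIntegrable 0 T)] at hFTC
  simp only [hdφ0, hdT, mul_zero, zero_mul, sub_zero] at hFTC
  have h2 : (∫ t in (0:ℝ)..T, 2 * ((2 * π * cos (φ t) ^ 3 * deriv φ t) ^ 2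
        / (4 * π ^ 2 * cos (φ t) ^ 2)))
      = 2 * ∫ t in (0:ℝ)..T, (2 * π * cos (φ t) ^ 3 * deriv φ t) ^ 2
        / (4 * π ^ 2 * cos (φ t) ^ 2) := intervalIntegral.integral_const_mul 2 _
  beta_reduce
  linarith [hFTC, h2]
end

section
/- Define h₁(t) = sinφ(t)·cosθ(t) and h₂(t) = 2π·cosφ(t)·(sinφ(t)·cosθ(t)·φ'(t) + sinθ(t)·cosφ(t)·θ'(t)). Then (h₁, h₂) solves the matrix Sturm–Liouville system with parameter l = 1 and spectral value λ = 0; that is, for all t ∈ ℝ: −(4π²·cos²φ·h₁')' + (1/cos²φ + 4π²·φ'² − 2 − 8π²·cos²φ·θ'²)·h₁ − (4π·φ'/cosφ)·h₂ = 0 and −(4π²·cos²φ·h₂')' + (1/cos²φ + 4π²·φ'² − 2 − 8π²·sin²φ·cos²φ·θ'²)·h₂ − (4π·φ'/cosφ)·h₁ = 0. -/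
open Real Set

set_option maxHeartbeats 2000000 in
/-- The pair `h₁ = sinφ·cosθ`, `h₂ = 2π·cosφ·(sinφ·cosθ·φ' + sinθ·cosφ·θ')`
solves the matrix Sturm–Liouville system with `l = 1` and `λ = 0`. -/
theorem l1_killing_solution
    (b : ℝ) (hb : b ∈ Set.Ioo (-(π/2)) 0)
    (φ θ : ℝ → ℝ) (hφs : ContDiff ℝ (⊤ : ℕ∞) φ) (hθs : ContDiff ℝ (⊤ : ℕ∞) θ)
    (hφ0 : φ 0 = b) (hdφ0 : deriv φ 0 = 0) (hθ0 : θ 0 = 0)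
    (hbd : ∀ t, |φ t| < π/2)
    (hθ' : ∀ t, deriv θ t = cos b ^ 2 / (2 * π * cos (φ t) ^ 4))
    (hφ' : ∀ t, (deriv φ t) ^ 2 = (cos (φ t) ^ 4 - cos b ^ 4) / (4 * π ^ 2 * cos (φ t) ^ 6))
    (hφ'' : ∀ t, deriv (deriv φ) t =
      tan (φ t) * (deriv φ t) ^ 2 - 2 * sin (φ t) * cos (φ t) * (deriv θ t) ^ 2)
    (h₁ h₂ : ℝ → ℝ)
    (hh₁ : ∀ t, h₁ t = sin (φ t) * cos (θ t))
    (hh₂ : ∀ t, h₂ t = 2 * π * cos (φ t)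
      * (sin (φ t) * cos (θ t) * deriv φ t + sin (θ t) * cos (φ t) * deriv θ t)) :
    (∀ t, -deriv (fun s => 4 * π ^ 2 * cos (φ s) ^ 2 * deriv h₁ s) t
        + (1 / cos (φ t) ^ 2 + 4 * π ^ 2 * (deriv φ t) ^ 2 - 2
            - 8 * π ^ 2 * cos (φ t) ^ 2 * (deriv θ t) ^ 2) * h₁ t
        - (4 * π * deriv φ t / cos (φ t)) * h₂ t = 0) ∧
    (∀ t, -deriv (fun s => 4 * π ^ 2 * cos (φ s) ^ 2 * deriv h₂ s) t
        + (1 / cos (φ t) ^ 2 + 4 * π ^ 2 * (deriv φ t) ^ 2 - 2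
            - 8 * π ^ 2 * sin (φ t) ^ 2 * cos (φ t) ^ 2 * (deriv θ t) ^ 2) * h₂ t
        - (4 * π * deriv φ t / cos (φ t)) * h₁ t = 0) := by
  have hπ : (0:ℝ) < π := Real.pi_pos
  have hc : ∀ u, 0 < cos (φ u) := fun u => Real.cos_pos_of_mem_Ioo
    ⟨by have := (abs_lt.mp (hbd u)).1; linarith, (abs_lt.mp (hbd u)).2⟩
  have hφd : Differentiable ℝ φ := hφs.differentiable (by simp)
  have hθd : Differentiable ℝ θ := hθs.differentiable (by simp)
  have hφd2 : Differentiable ℝ (deriv φ) :=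
    (contDiff_infty_iff_deriv.mp hφs).2.differentiable (by simp)
  have hθd2 : Differentiable ℝ (deriv θ) :=
    (contDiff_infty_iff_deriv.mp hθs).2.differentiable (by simp)
  -- second derivative of θ
  have hθ2 : ∀ u, deriv (deriv θ) u
      = 2 * cos b ^ 2 * sin (φ u) * deriv φ u / (π * cos (φ u) ^ 5) := by
    intro u
    have hcu := hc u
    have hden : (2 * π * cos (φ u) ^ 4) ≠ 0 := by positivity
    have H := (hasDerivAt_const u (cos b ^ 2)).div
      (((hφd u).hasDerivAt.cos.pow 4).const_mul (2*π)) hden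
    simp only [Pi.mul_def, Pi.div_def, Pi.pow_def, Pi.add_def, Pi.sub_def] at H
    rw [funext hθ', H.deriv]
    rw [div_eq_div_iff (by positivity) (by positivity)]
    ring
  -- first derivative of h₁
  have Hd1 : ∀ u, deriv h₁ u =
      cos (φ u) * cos (θ u) * deriv φ u - sin (φ u) * sin (θ u) * deriv θ u := by
    intro u
    have H := (hφd u).hasDerivAt.sin.mul (hθd u).hasDerivAt.cos
    simp only [Pi.mul_def, Pi.div_def, Pi.pow_def, Pi.add_def, Pi.sub_def] at H
    rw [funext hh₁, H.deriv]
    ring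
  have HF1 : (fun s => 4 * π ^ 2 * cos (φ s) ^ 2 * deriv h₁ s)
      = fun s => 4 * π ^ 2 * cos (φ s) ^ 2 *
        (cos (φ s) * cos (θ s) * deriv φ s - sin (φ s) * sin (θ s) * deriv θ s) := by
    funext s; rw [Hd1 s]
  -- first derivative of h₂ (simplified closed form)
  have Hd2 : ∀ u, deriv h₂ u =
      cos (θ u) * (cos (φ u) ^ 4 - cos b ^ 4) / (2 * π * cos (φ u) ^ 4)
      + cos b ^ 2 * sin (φ u) * sin (θ u) * deriv φ u / cos (φ u) ^ 3
      + cos b ^ 4 * cos (θ u) * (1 - 2 * sin (φ u) ^ 2) / (2 * π * cos (φ u) ^ 6) := by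
    intro u
    have hcu := hc u
    have H := ((hφd u).hasDerivAt.cos.const_mul (2*π)).mul
      ((((hφd u).hasDerivAt.sin.mul (hθd u).hasDerivAt.cos).mul (hφd2 u).hasDerivAt).add
       (((hθd u).hasDerivAt.sin.mul (hφd u).hasDerivAt.cos).mul (hθd2 u).hasDerivAt))
    simp only [Pi.mul_def, Pi.div_def, Pi.pow_def, Pi.add_def, Pi.sub_def] at H
    rw [funext hh₂, H.deriv, hφ'' u, hθ2 u, hθ' u, Real.tan_eq_sin_div_cos]
    have hp2 : deriv φ u ^ 2 * (4 * π ^ 2 * cos (φ u) ^ 6) = cos (φ u) ^ 4 - cos b ^ 4 := by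
      rw [hφ' u]; exact div_mul_cancel₀ _ (by positivity)
    have hs := sin_sq_add_cos_sq (φ u)
    have hS := sin_sq_add_cos_sq (θ u)
    have hcne := (hc u).ne'
    field_simp
    linear_combination ((1:ℝ) * cos (φ u) ^ 2 * cos (θ u)) * hp2
  constructor
  · intro t
    have hct := hc t
    have H := (((hφd t).hasDerivAt.cos.pow 2).const_mul (4*π^2)).mul
      ((((hφd t).hasDerivAt.cos.mul (hθd t).hasDerivAt.cos).mul (hφd2 t).hasDerivAt).sub
       (((hφd t).hasDerivAt.sin.mul (hθd t).hasDerivAt.sin).mul (hθd2 t).hasDerivAt))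
    simp only [Pi.mul_def, Pi.div_def, Pi.pow_def, Pi.add_def, Pi.sub_def] at H
    rw [HF1, H.deriv, hh₁ t, hh₂ t, hφ'' t, hθ2 t, hθ' t, Real.tan_eq_sin_div_cos]
    have hp2 : deriv φ t ^ 2 * (4 * π ^ 2 * cos (φ t) ^ 6) = cos (φ t) ^ 4 - cos b ^ 4 := by
      rw [hφ' t]; exact div_mul_cancel₀ _ (by positivity)
    have hs := sin_sq_add_cos_sq (φ t)
    have hS := sin_sq_add_cos_sq (θ t)
    have hcne := hct.ne'
    field_simp
    linear_combination ((8:ℝ) * sin (φ t) * cos (φ t) ^ 2 * cos (θ t) + (-4:ℝ) * sin (φ t) * cos (θ t)) * hp2 + ((16:ℝ) * deriv φ t * cos (φ t) ^ 3 * sin (θ t) * cos b ^ 2 * π) * hs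
  · intro t
    have hct := hc t
    have HF2 : (fun s => 4 * π ^ 2 * cos (φ s) ^ 2 * deriv h₂ s)
        = fun s => 4 * π ^ 2 * cos (φ s) ^ 2 *
          (cos (θ s) * (cos (φ s) ^ 4 - cos b ^ 4) / (2 * π * cos (φ s) ^ 4)
           + cos b ^ 2 * sin (φ s) * sin (θ s) * deriv φ s / cos (φ s) ^ 3
           + cos b ^ 4 * cos (θ s) * (1 - 2 * sin (φ s) ^ 2) / (2 * π * cos (φ s) ^ 6)) := by
      funext s; rw [Hd2 s]
    have H := (((hφd t).hasDerivAt.cos.pow 2).const_mul (4*π^2)).mul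
      (((((hθd t).hasDerivAt.cos.mul (((hφd t).hasDerivAt.cos.pow 4).sub_const (cos b ^ 4))).div
          (((hφd t).hasDerivAt.cos.pow 4).const_mul (2*π)) (by simp only [Pi.pow_apply]; positivity)).add
        (((((hφd t).hasDerivAt.sin.const_mul (cos b ^ 2)).mul (hθd t).hasDerivAt.sin).mul
            (hφd2 t).hasDerivAt).div ((hφd t).hasDerivAt.cos.pow 3) (by simp only [Pi.pow_apply]; positivity))).add
       ((((hθd t).hasDerivAt.cos.const_mul (cos b ^ 4)).mul
           (((((hφd t).hasDerivAt.sin.pow 2).const_mul 2)).const_sub 1)).div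
         (((hφd t).hasDerivAt.cos.pow 6).const_mul (2*π)) (by simp only [Pi.pow_apply]; positivity)))
    simp only [Pi.mul_def, Pi.div_def, Pi.pow_def, Pi.add_def, Pi.sub_def] at H
    rw [HF2, H.deriv, hh₁ t, hh₂ t, hφ'' t, hθ' t, Real.tan_eq_sin_div_cos]
    have hp2 : deriv φ t ^ 2 * (4 * π ^ 2 * cos (φ t) ^ 6) = cos (φ t) ^ 4 - cos b ^ 4 := by
      rw [hφ' t]; exact div_mul_cancel₀ _ (by positivity)
    have hs := sin_sq_add_cos_sq (φ t)
    have hS := sin_sq_add_cos_sq (θ t)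
    have hcne := hct.ne'
    field_simp
    linear_combination ((-8:ℝ) * sin (φ t) ^ 2 * cos (φ t) ^ 2 * sin (θ t) * cos b ^ 2 + (-4:ℝ) * cos (φ t) ^ 4 * sin (θ t) * cos b ^ 2 + (8:ℝ) * deriv φ t * sin (φ t) * cos (φ t) ^ 5 * cos (θ t) * π + (4:ℝ) * cos (φ t) ^ 2 * sin (θ t) * cos b ^ 2) * hp2 + ((48:ℝ) * deriv φ t * sin (φ t) * cos (φ t) ^ 5 * cos (θ t) * cos b ^ 4 * π + (-8:ℝ) * cos (φ t) ^ 6 * sin (θ t) * cos b ^ 2) * hs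
end

section
/- Define h₁(t) = cosφ(t) and h₂(t) = 2π·cos²φ(t)·φ'(t). Then (h₁, h₂) solves the matrix Sturm–Liouville system with parameter l = 2 and spectral value λ = 0; that is, for all t ∈ ℝ: −(4π²·cos²φ·h₁')' + (4/cos²φ + 4π²·φ'² − 2 − 8π²·cos²φ·θ'²)·h₁ − (8π·φ'/cosφ)·h₂ = 0 and −(4π²·cos²φ·h₂')' + (4/cos²φ + 4π²·φ'² − 2 − 8π²·sin²φ·cos²φ·θ'²)·h₂ − (8π·φ'/cosφ)·h₁ = 0. -/
open Real Set

/-- The pair `h₁ = cosφ`, `h₂ = 2π·cos²φ·φ'` solves the matrix Sturm–Liouville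
system with `l = 2` and `λ = 0`. -/
theorem l2_killing_solution
    (b : ℝ) (hb : b ∈ Set.Ioo (-(π/2)) 0)
    (φ θ : ℝ → ℝ) (hφs : ContDiff ℝ (⊤ : ℕ∞) φ) (hθs : ContDiff ℝ (⊤ : ℕ∞) θ)
    (hφ0 : φ 0 = b) (hdφ0 : deriv φ 0 = 0) (hθ0 : θ 0 = 0)
    (hbd : ∀ t, |φ t| < π/2)
    (hθ' : ∀ t, deriv θ t = cos b ^ 2 / (2 * π * cos (φ t) ^ 4))
    (hφ' : ∀ t, (deriv φ t) ^ 2 = (cos (φ t) ^ 4 - cos b ^ 4) / (4 * π ^ 2 * cos (φ t) ^ 6))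
    (hφ'' : ∀ t, deriv (deriv φ) t =
      tan (φ t) * (deriv φ t) ^ 2 - 2 * sin (φ t) * cos (φ t) * (deriv θ t) ^ 2)
    (h₁ h₂ : ℝ → ℝ)
    (hh₁ : ∀ t, h₁ t = cos (φ t))
    (hh₂ : ∀ t, h₂ t = 2 * π * cos (φ t) ^ 2 * deriv φ t) :
    (∀ t, -deriv (fun s => 4 * π ^ 2 * cos (φ s) ^ 2 * deriv h₁ s) t
        + (4 / cos (φ t) ^ 2 + 4 * π ^ 2 * (deriv φ t) ^ 2 - 2
            - 8 * π ^ 2 * cos (φ t) ^ 2 * (deriv θ t) ^ 2) * h₁ t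
        - (8 * π * deriv φ t / cos (φ t)) * h₂ t = 0) ∧
    (∀ t, -deriv (fun s => 4 * π ^ 2 * cos (φ s) ^ 2 * deriv h₂ s) t
        + (4 / cos (φ t) ^ 2 + 4 * π ^ 2 * (deriv φ t) ^ 2 - 2
            - 8 * π ^ 2 * sin (φ t) ^ 2 * cos (φ t) ^ 2 * (deriv θ t) ^ 2) * h₂ t
        - (8 * π * deriv φ t / cos (φ t)) * h₁ t = 0) := by

  have hπ : (π : ℝ) ≠ 0 := Real.pi_ne_zero
  have hc : ∀ t, 0 < cos (φ t) := by
    intro t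
    have h := abs_lt.mp (hbd t)
    exact Real.cos_pos_of_mem_Ioo ⟨h.1, h.2⟩
  have hφd : Differentiable ℝ φ := hφs.differentiable (by simp)
  have hφd2 : Differentiable ℝ (deriv φ) := (contDiff_infty_iff_deriv.mp hφs).2.differentiable (by simp)
  have hE1 : h₁ = fun s => cos (φ s) := funext hh₁
  have hE2 : h₂ = fun s => 2 * π * cos (φ s) ^ 2 * deriv φ s := funext hh₂
  have hd1 : ∀ u, deriv h₁ u = -sin (φ u) * deriv φ u := by
    intro u
    rw [hE1]
    exact ((hφd u).hasDerivAt.cos).deriv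
  have hd2 : ∀ u, deriv h₂ u =
      -sin (φ u) * (cos (φ u) ^ 4 + cos b ^ 4) / (2 * π * cos (φ u) ^ 5) := by
    intro u
    have hcu : cos (φ u) ≠ 0 := (hc u).ne'
    have hfun : h₂ = fun s => 2 * π * (cos (φ s) ^ 2 * deriv φ s) := by
      funext s; rw [hh₂ s]; ring
    have H : HasDerivAt (fun s => 2 * π * (cos (φ s) ^ 2 * deriv φ s))
        (2 * π * (-2 * cos (φ u) * sin (φ u) * (deriv φ u) ^ 2
          + cos (φ u) ^ 2 * deriv (deriv φ) u)) u := by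
      have h1 := ((hφd u).hasDerivAt.cos).pow 2
      have h2 := h1.mul (hφd2 u).hasDerivAt
      have h3 := h2.const_mul (2 * π)
      refine h3.congr_deriv ?_
      simp only [Pi.pow_apply, Nat.cast_ofNat]
      ring
    rw [hfun, H.deriv, hφ'' u, Real.tan_eq_sin_div_cos, hθ' u, hφ' u]
    field_simp
    ring
  constructor
  · intro t
    have hct : cos (φ t) ≠ 0 := (hc t).ne'
    have hfun : (fun s => 4 * π ^ 2 * cos (φ s) ^ 2 * deriv h₁ s)
        = fun s => -(4 * π ^ 2) * (cos (φ s) ^ 2 * (sin (φ s) * deriv φ s)) := by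
      funext s; rw [hd1 s]; ring
    rw [hfun]
    have H : HasDerivAt (fun s => -(4 * π ^ 2) * (cos (φ s) ^ 2 * (sin (φ s) * deriv φ s)))
        (-(4 * π ^ 2) * (cos (φ t) ^ 3 * (deriv φ t) ^ 2
          - 2 * cos (φ t) * sin (φ t) ^ 2 * (deriv φ t) ^ 2
          + cos (φ t) ^ 2 * sin (φ t) * deriv (deriv φ) t)) t := by
      have h1 := ((hφd t).hasDerivAt.cos).pow 2
      have h2 := ((hφd t).hasDerivAt.sin).mul (hφd2 t).hasDerivAt
      have h3 := (h1.mul h2).const_mul (-(4 * π ^ 2))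
      refine h3.congr_deriv ?_
      simp only [Pi.pow_apply, Pi.mul_apply, Nat.cast_ofNat]
      ring
    rw [H.deriv]
    have hcross : 8 * π * deriv φ t / cos (φ t) * h₂ t
        = 16 * π ^ 2 * cos (φ t) * (deriv φ t) ^ 2 := by
      rw [hh₂ t]; field_simp; ring
    rw [hcross]
    have hr2 : cos (φ t) ^ 2 * sin (φ t) * deriv (deriv φ) t
        = sin (φ t) ^ 2 * cos (φ t) * (deriv φ t) ^ 2
          - 2 * sin (φ t) ^ 2 * cos (φ t) ^ 3 * (deriv θ t) ^ 2 := by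
      rw [hφ'' t, Real.tan_eq_sin_div_cos]; field_simp
    rw [hr2, hh₁ t, hθ' t, hφ' t, Real.sin_sq]
    field_simp
    ring
  · intro t
    have hct : cos (φ t) ≠ 0 := (hc t).ne'
    have hfun : (fun s => 4 * π ^ 2 * cos (φ s) ^ 2 * deriv h₂ s)
        = fun s => -(2 * π) * (sin (φ s) * (cos (φ s) ^ 4 + cos b ^ 4) / cos (φ s) ^ 3) := by
      funext s
      have hcs : cos (φ s) ≠ 0 := (hc s).ne'
      rw [hd2 s]
      field_simp
      ring
    rw [hfun]
    have H : HasDerivAt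
        (fun s => -(2 * π) * (sin (φ s) * (cos (φ s) ^ 4 + cos b ^ 4) / cos (φ s) ^ 3))
        (-(2 * π) * (deriv φ t * (cos (φ t) ^ 4 + cos b ^ 4) / cos (φ t) ^ 2
          - 4 * sin (φ t) ^ 2 * deriv φ t
          + 3 * sin (φ t) ^ 2 * deriv φ t * (cos (φ t) ^ 4 + cos b ^ 4) / cos (φ t) ^ 4)) t := by
      have hnum : HasDerivAt (fun s => sin (φ s) * (cos (φ s) ^ 4 + cos b ^ 4))
          (cos (φ t) * deriv φ t * (cos (φ t) ^ 4 + cos b ^ 4)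
            + sin (φ t) * (4 * cos (φ t) ^ 3 * (-sin (φ t) * deriv φ t))) t := by
        have h1 := (hφd t).hasDerivAt.sin
        have h2 := (((hφd t).hasDerivAt.cos).pow 4).add_const (cos b ^ 4)
        exact h1.mul h2
      have hden := ((hφd t).hasDerivAt.cos).pow 3
      have h3 := (hnum.div hden (pow_ne_zero 3 hct)).const_mul (-(2 * π))
      refine h3.congr_deriv ?_
      simp only [Pi.pow_apply, Nat.cast_ofNat]
      field_simp
      ring
    rw [H.deriv, hh₁ t, hh₂ t, hθ' t, hφ' t, Real.sin_sq]
    field_simp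
    ring
end

section
/- Assume additionally that φ(t+T) = −φ(t) for all t ∈ ℝ. Let l be a nonnegative integer, λ ∈ ℝ, and suppose (h₁, h₂) : ℝ → ℝ² is twice differentiable and solves the matrix Sturm–Liouville system: −(4π²·cos²φ·h₁')' + (l²/cos²φ + 4π²·φ'² − 2 − 8π²·cos²φ·θ'²)·h₁ − (4πl·φ'/cosφ)·h₂ = λ·h₁ and −(4π²·cos²φ·h₂')' + (l²/cos²φ + 4π²·φ'² − 2 − 8π²·sin²φ·cos²φ·θ'²)·h₂ − (4πl·φ'/cosφ)·h₁ = λ·h₂ for all t. Then the pair (g₁, g₂) defined by g₁(t) = h₁(t+T), g₂(t) = −h₂(t+T) also solves the same system with the same l and λ. -/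
open Real Set

/-- The transformation `(h₁(t), h₂(t)) ↦ (h₁(t+T), −h₂(t+T))` maps solutions of
the separated matrix Sturm–Liouville system to solutions with the same `l`
and `λ`, provided `φ` is `T`-antiperiodic. -/
theorem shift_symmetry_of_solutions
    (b : ℝ) (hb : b ∈ Set.Ioo (-(π/2)) 0)
    (φ θ : ℝ → ℝ) (hφs : ContDiff ℝ (⊤ : ℕ∞) φ) (hθs : ContDiff ℝ (⊤ : ℕ∞) θ)
    (hφ0 : φ 0 = b) (hdφ0 : deriv φ 0 = 0) (hθ0 : θ 0 = 0)
    (hbd : ∀ t, |φ t| < π/2)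
    (hθ' : ∀ t, deriv θ t = cos b ^ 2 / (2 * π * cos (φ t) ^ 4))
    (hφ' : ∀ t, (deriv φ t) ^ 2 = (cos (φ t) ^ 4 - cos b ^ 4) / (4 * π ^ 2 * cos (φ t) ^ 6))
    (hφ'' : ∀ t, deriv (deriv φ) t =
      tan (φ t) * (deriv φ t) ^ 2 - 2 * sin (φ t) * cos (φ t) * (deriv θ t) ^ 2)
    (T : ℝ) (hT : 0 < T) (hφT : φ T = -b)
    (hmono : ∀ t ∈ Set.Ioo (0:ℝ) T, 0 < deriv φ t)
    (hanti : ∀ t, φ (t + T) = -φ t)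
    (l : ℕ) (lam : ℝ) (h₁ h₂ : ℝ → ℝ)
    (hd₁ : Differentiable ℝ h₁) (hd₁' : Differentiable ℝ (deriv h₁))
    (hd₂ : Differentiable ℝ h₂) (hd₂' : Differentiable ℝ (deriv h₂))
    (heq₁ : ∀ t, -deriv (fun s => 4 * π ^ 2 * cos (φ s) ^ 2 * deriv h₁ s) t
        + ((l:ℝ) ^ 2 / cos (φ t) ^ 2 + 4 * π ^ 2 * (deriv φ t) ^ 2 - 2
            - 8 * π ^ 2 * cos (φ t) ^ 2 * (deriv θ t) ^ 2) * h₁ t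
        - (4 * π * (l:ℝ) * deriv φ t / cos (φ t)) * h₂ t = lam * h₁ t)
    (heq₂ : ∀ t, -deriv (fun s => 4 * π ^ 2 * cos (φ s) ^ 2 * deriv h₂ s) t
        + ((l:ℝ) ^ 2 / cos (φ t) ^ 2 + 4 * π ^ 2 * (deriv φ t) ^ 2 - 2
            - 8 * π ^ 2 * sin (φ t) ^ 2 * cos (φ t) ^ 2 * (deriv θ t) ^ 2) * h₂ t
        - (4 * π * (l:ℝ) * deriv φ t / cos (φ t)) * h₁ t = lam * h₂ t)
    (g₁ g₂ : ℝ → ℝ) (hg₁ : ∀ t, g₁ t = h₁ (t + T)) (hg₂ : ∀ t, g₂ t = -h₂ (t + T)) :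
    (∀ t, -deriv (fun s => 4 * π ^ 2 * cos (φ s) ^ 2 * deriv g₁ s) t
        + ((l:ℝ) ^ 2 / cos (φ t) ^ 2 + 4 * π ^ 2 * (deriv φ t) ^ 2 - 2
            - 8 * π ^ 2 * cos (φ t) ^ 2 * (deriv θ t) ^ 2) * g₁ t
        - (4 * π * (l:ℝ) * deriv φ t / cos (φ t)) * g₂ t = lam * g₁ t) ∧
    (∀ t, -deriv (fun s => 4 * π ^ 2 * cos (φ s) ^ 2 * deriv g₂ s) t
        + ((l:ℝ) ^ 2 / cos (φ t) ^ 2 + 4 * π ^ 2 * (deriv φ t) ^ 2 - 2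
            - 8 * π ^ 2 * sin (φ t) ^ 2 * cos (φ t) ^ 2 * (deriv θ t) ^ 2) * g₂ t
        - (4 * π * (l:ℝ) * deriv φ t / cos (φ t)) * g₁ t = lam * g₂ t) := by

  have hcos : ∀ s : ℝ, cos (φ (s + T)) = cos (φ s) := fun s => by
    rw [hanti, Real.cos_neg]
  have hφ'T : ∀ s : ℝ, deriv φ (s + T) = -deriv φ s := by
    intro s
    have h1 : deriv (fun x => φ (x + T)) s = deriv φ (s + T) :=
      deriv_comp_add_const φ T s
    have h2 : (fun x => φ (x + T)) = fun x => -φ x := funext hanti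
    rw [h2] at h1
    rw [← h1, deriv.fun_neg]
  have hθT : ∀ s : ℝ, deriv θ (s + T) = deriv θ s := by
    intro s
    rw [hθ' (s + T), hθ' s, hcos s]
  have hg₁f : g₁ = fun s => h₁ (s + T) := funext hg₁
  have hg₂f : g₂ = fun s => -h₂ (s + T) := funext hg₂
  have hdg₁ : ∀ s : ℝ, deriv g₁ s = deriv h₁ (s + T) := by
    intro s; rw [hg₁f]; exact deriv_comp_add_const h₁ T s
  have hdg₂ : ∀ s : ℝ, deriv g₂ s = -deriv h₂ (s + T) := by
    intro s
    rw [hg₂f, deriv.fun_neg, deriv_comp_add_const h₂ T s]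
  have hF₁ : ∀ t : ℝ, deriv (fun s => 4 * π ^ 2 * cos (φ s) ^ 2 * deriv g₁ s) t
      = deriv (fun s => 4 * π ^ 2 * cos (φ s) ^ 2 * deriv h₁ s) (t + T) := by
    intro t
    have hfun : (fun s => 4 * π ^ 2 * cos (φ s) ^ 2 * deriv g₁ s)
        = fun s => (fun u => 4 * π ^ 2 * cos (φ u) ^ 2 * deriv h₁ u) (s + T) := by
      funext s
      simp only [hdg₁ s, hcos s]
    rw [hfun]; exact deriv_comp_add_const (fun u => 4 * π ^ 2 * cos (φ u) ^ 2 * deriv h₁ u) T t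
  have hF₂ : ∀ t : ℝ, deriv (fun s => 4 * π ^ 2 * cos (φ s) ^ 2 * deriv g₂ s) t
      = -deriv (fun s => 4 * π ^ 2 * cos (φ s) ^ 2 * deriv h₂ s) (t + T) := by
    intro t
    have hfun : (fun s => 4 * π ^ 2 * cos (φ s) ^ 2 * deriv g₂ s)
        = fun s => -((fun u => 4 * π ^ 2 * cos (φ u) ^ 2 * deriv h₂ u) (s + T)) := by
      funext s
      simp only [hdg₂ s, hcos s]
      ring
    rw [hfun, deriv.fun_neg]
    exact congrArg Neg.neg (deriv_comp_add_const (fun u => 4 * π ^ 2 * cos (φ u) ^ 2 * deriv h₂ u) T t)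
  constructor
  · intro t
    have E := heq₁ (t + T)
    rw [hcos t, hφ'T t, hθT t] at E
    rw [hF₁ t, hg₁ t, hg₂ t]
    linear_combination E
  · intro t
    have E := heq₂ (t + T)
    rw [hcos t, hφ'T t, hθT t, hanti t, Real.sin_neg] at E
    rw [hF₂ t, hg₁ t, hg₂ t]
    linear_combination -E
end
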